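/- arXiv:2501.00427 — 12 statements merged into one kernel-verified Lean document; each statement's English description precedes it below -/
import Mathlib

section
/- Let ν ∈ (0,1], let S ⊆ ℝⁿ be a convex set, and let h : ℝⁿ → ℝ. Then h is ν-paraconvex on S (i.e., there exists ρ ≥ 0 such that h(λx+(1−λ)y) ≤ λh(x) + (1−λ)h(y) + ρ·min{λ,1−λ}·‖x−y‖^{1+ν} for all x, y ∈ S and λ ∈ [0,1]) if and only if there exists a constant C ≥ 0 such that h(λx+(1−λ)y) ≤ λh(x) + (1−λ)h(y) + C·‖x−y‖^{1+ν} for all x, y ∈ S and λ ∈ [0,1]. -/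
/-!
For `t ≤ 1/2` write `t • x + (1 - t) • y = (2t) • m + (1 - 2t) • y` with `m` the midpoint of
`x` and `y`. The inequality at `(m, y, 2t)` together with the one at the midpoint gives the
inequality at `(x, y, t)` with error `(2C + 2^(1-p) ρ) t ‖x - y‖^p`. Since `p > 1`,
`ρ = 4C / (1 - 2^(1-p))` is a fixed point of this recursion, so a dyadic induction starting
from `t ∈ (1/4, 1/2]`, where `C ≤ 4 C t`, yields the error `ρ t ‖x - y‖^p`; `t ≥ 1/2` follows
by symmetry.
-/

open Set

variable {E : Type*} [NormedAddCommGroup E] [NormedSpace ℝ E]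

def ConvexOnUpTo (S : Set E) (h : E → ℝ) (err : ℝ → ℝ → ℝ) : Prop :=
  ∀ x ∈ S, ∀ y ∈ S, ∀ t ∈ Icc (0 : ℝ) 1,
    h (t • x + (1 - t) • y) ≤ t * h x + (1 - t) * h y + err t ‖x - y‖

namespace ConvexOnUpTo

variable {S : Set E} {h : E → ℝ} {err err' : ℝ → ℝ → ℝ} {C ρ p t : ℝ} {x y : E}

theorem mono (H : ConvexOnUpTo S h err)
    (hle : ∀ t ∈ Icc (0 : ℝ) 1, ∀ r, 0 ≤ r → err t r ≤ err' t r) :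
    ConvexOnUpTo S h err' := fun x hx y hy t ht =>
  (H x hx y hy t ht).trans (by gcongr; exact hle t ht _ (norm_nonneg _))

theorem of_le_half (herr : ∀ t r, err (1 - t) r = err t r)
    (H : ∀ x ∈ S, ∀ y ∈ S, ∀ t ∈ Icc (0 : ℝ) (1 / 2),
      h (t • x + (1 - t) • y) ≤ t * h x + (1 - t) * h y + err t ‖x - y‖) :
    ConvexOnUpTo S h err := by
  intro x hx y hy t ⟨ht₀, ht₁⟩
  rcases le_total t (1 / 2) with ht | ht
  · exact H x hx y hy t ⟨ht₀, ht⟩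
  · have hsymm := H y hy x hx (1 - t) ⟨by linarith, by linarith⟩
    rwa [sub_sub_cancel, add_comm, norm_sub_rev, herr, add_comm ((1 - t) * h y)] at hsymm

theorem le_of_quarter_lt (H : ConvexOnUpTo S h fun _ r => C * r ^ p) (hC : 0 ≤ C)
    (hρ : 4 * C ≤ ρ) (hx : x ∈ S) (hy : y ∈ S) (ht₀ : 1 / 4 < t) (ht₁ : t ≤ 1 / 2) :
    h (t • x + (1 - t) • y) ≤ t * h x + (1 - t) * h y + ρ * t * ‖x - y‖ ^ p := by
  have hCρ : C ≤ ρ * t := by nlinarith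
  calc h (t • x + (1 - t) • y) ≤ t * h x + (1 - t) * h y + C * ‖x - y‖ ^ p :=
        H x hx y hy t ⟨by linarith, by linarith⟩
    _ ≤ t * h x + (1 - t) * h y + ρ * t * ‖x - y‖ ^ p := by gcongr

theorem le_of_le_midpoint (H : ConvexOnUpTo S h fun _ r => C * r ^ p)
    (hρ : 2 * C + ρ * 2 ^ (1 - p) ≤ ρ) (hx : x ∈ S) (hy : y ∈ S) (ht : 0 ≤ t)
    (hm : h ((2 * t) • midpoint ℝ x y + (1 - 2 * t) • y) ≤
      2 * t * h (midpoint ℝ x y) + (1 - 2 * t) * h y + ρ * (2 * t) * ‖midpoint ℝ x y - y‖ ^ p) :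
    h (t • x + (1 - t) • y) ≤ t * h x + (1 - t) * h y + ρ * t * ‖x - y‖ ^ p := by
  have hmpt : midpoint ℝ x y = (1 / 2 : ℝ) • x + (1 - 1 / 2 : ℝ) • y := by
    rw [midpoint_eq_smul_add, invOf_eq_inv]; module
  have hpt : (2 * t) • midpoint ℝ x y + (1 - 2 * t) • y = t • x + (1 - t) • y := by
    rw [hmpt]; module
  have hmid : h (midpoint ℝ x y) ≤ 1 / 2 * h x + (1 - 1 / 2) * h y + C * ‖x - y‖ ^ p :=
    hmpt ▸ H x hx y hy (1 / 2) ⟨by norm_num, by norm_num⟩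
  have hnorm : ‖midpoint ℝ x y - y‖ ^ p = 2 ^ (-p) * ‖x - y‖ ^ p := by
    rw [← dist_eq_norm, dist_midpoint_right, dist_eq_norm, Real.norm_two,
      Real.mul_rpow (by norm_num) (norm_nonneg _), Real.inv_rpow zero_le_two,
      Real.rpow_neg zero_le_two]
  have hpow : (2 : ℝ) * 2 ^ (-p) = 2 ^ (1 - p) := by
    rw [sub_eq_add_neg, Real.rpow_add zero_lt_two, Real.rpow_one]
  rw [hpt, hnorm] at hm
  have hρt := mul_le_mul_of_nonneg_right hρ (mul_nonneg ht (by positivity : 0 ≤ ‖x - y‖ ^ p))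
  rw [← hpow] at hρt
  linarith [mul_le_mul_of_nonneg_left hmid (by linarith : 0 ≤ 2 * t)]

theorem le_of_half_pow_lt (hS : Convex ℝ S) (H : ConvexOnUpTo S h fun _ r => C * r ^ p)
    (hC : 0 ≤ C) (hρ₁ : 4 * C ≤ ρ) (hρ₂ : 2 * C + ρ * 2 ^ (1 - p) ≤ ρ) (k : ℕ) :
    ∀ x ∈ S, ∀ y ∈ S, ∀ t : ℝ, (1 / 2) ^ (k + 2) < t → t ≤ 1 / 2 →
      h (t • x + (1 - t) • y) ≤ t * h x + (1 - t) * h y + ρ * t * ‖x - y‖ ^ p := by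
  induction k with
  | zero =>
    intro x hx y hy t ht₀ ht₁
    exact le_of_quarter_lt H hC hρ₁ hx hy (by norm_num at ht₀ ⊢; exact ht₀) ht₁
  | succ k ih =>
    intro x hx y hy t ht₀ ht₁
    rcases lt_or_ge (1 / 4) t with hlarge | hsmall
    · exact le_of_quarter_lt H hC hρ₁ hx hy hlarge ht₁
    · have h2t : (1 / 2 : ℝ) ^ (k + 2) < 2 * t := by
        rw [pow_succ] at ht₀; linarith
      exact le_of_le_midpoint H hρ₂ hx hy (ht₀.le.trans' (by positivity))
        (ih _ (hS.midpoint_mem hx hy) y hy (2 * t) h2t (by linarith))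

theorem le_of_mem_Icc_half (hS : Convex ℝ S) (H : ConvexOnUpTo S h fun _ r => C * r ^ p)
    (hC : 0 ≤ C) (hρ₁ : 4 * C ≤ ρ) (hρ₂ : 2 * C + ρ * 2 ^ (1 - p) ≤ ρ)
    (hx : x ∈ S) (hy : y ∈ S) (ht : t ∈ Icc (0 : ℝ) (1 / 2)) :
    h (t • x + (1 - t) • y) ≤ t * h x + (1 - t) * h y + ρ * t * ‖x - y‖ ^ p := by
  obtain ⟨ht₀, ht₁⟩ := ht
  rcases ht₀.eq_or_lt with rfl | ht₀
  · simp
  obtain ⟨k, hk⟩ := exists_pow_lt_of_lt_one ht₀ (by norm_num : (1 / 2 : ℝ) < 1)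
  refine le_of_half_pow_lt hS H hC hρ₁ hρ₂ k x hx y hy t (lt_of_le_of_lt ?_ hk) ht₁
  exact pow_le_pow_of_le_one (by norm_num) (by norm_num) (by omega)

theorem exists_min_of_const (hS : Convex ℝ S) (hp : 1 < p)
    (H : ConvexOnUpTo S h fun _ r => C * r ^ p) (hC : 0 ≤ C) :
    ∃ ρ, 0 ≤ ρ ∧ ConvexOnUpTo S h fun t r => ρ * min t (1 - t) * r ^ p := by
  set q : ℝ := 2 ^ (1 - p)
  have hq : q < 1 := Real.rpow_lt_one_of_one_lt_of_neg one_lt_two (by linarith)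
  have hq₀ : 0 < q := by positivity
  set ρ := 4 * C / (1 - q)
  have hρ₀ : 0 ≤ ρ := div_nonneg (by linarith) (by linarith)
  have hρ : ρ * (1 - q) = 4 * C := div_mul_cancel₀ _ (by linarith)
  refine ⟨ρ, hρ₀, of_le_half (fun t r => by rw [min_comm, sub_sub_cancel]) ?_⟩
  intro x hx y hy t ht
  rw [min_eq_left (by linarith [ht.2])]
  exact le_of_mem_Icc_half hS H hC (by nlinarith) (by linarith) hx hy ht

end ConvexOnUpTo

/-- For `ν ∈ (0,1]`, a function `h` on a convex set `S ⊆ ℝⁿ` is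
`ν`-paraconvex (with the `min {λ, 1-λ}` factor) iff the same inequality holds with a
constant `C ≥ 0` and no `min` factor. -/
theorem paraconvex_iff_no_min {n : ℕ} (ν : ℝ) (hν : ν ∈ Set.Ioc (0 : ℝ) 1)
    (S : Set (EuclideanSpace ℝ (Fin n))) (hS : Convex ℝ S)
    (h : EuclideanSpace ℝ (Fin n) → ℝ) :
    (∃ ρ : ℝ, 0 ≤ ρ ∧ ∀ x ∈ S, ∀ y ∈ S, ∀ t ∈ Set.Icc (0 : ℝ) 1,
        h (t • x + (1 - t) • y) ≤
          t * h x + (1 - t) * h y + ρ * min t (1 - t) * ‖x - y‖ ^ (1 + ν))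
      ↔
    (∃ C : ℝ, 0 ≤ C ∧ ∀ x ∈ S, ∀ y ∈ S, ∀ t ∈ Set.Icc (0 : ℝ) 1,
        h (t • x + (1 - t) • y) ≤
          t * h x + (1 - t) * h y + C * ‖x - y‖ ^ (1 + ν)) := by
  change (∃ ρ, 0 ≤ ρ ∧ ConvexOnUpTo S h fun t r => ρ * min t (1 - t) * r ^ (1 + ν)) ↔
    ∃ C, 0 ≤ C ∧ ConvexOnUpTo S h fun _ r => C * r ^ (1 + ν)
  constructor
  · rintro ⟨ρ, hρ, H⟩
    refine ⟨ρ, hρ, H.mono fun t ht r hr => ?_⟩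
    have hmin : min t (1 - t) ≤ 1 := (min_le_left _ _).trans ht.2
    exact mul_le_mul_of_nonneg_right (mul_le_of_le_one_right hρ hmin) (Real.rpow_nonneg hr _)
  · rintro ⟨C, hC, H⟩
    exact ConvexOnUpTo.exists_min_of_const hS (by linarith [hν.1]) H hC
end

section
/- Let 0 < ν < 1 and C ≥ 0, and let h : ℝⁿ → ℝ be such that the function x ↦ h(x) + C‖x‖^{ν+1} is convex on ℝⁿ. Then for all x, y ∈ ℝⁿ and λ ∈ [0,1], h(λx+(1−λ)y) ≤ λh(x) + (1−λ)h(y) + C·(λ(1−λ))^{(ν+1)/2}·‖x−y‖^{ν+1}; in particular h is ν-paraconvex on ℝⁿ. -/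
/-!
Write `p = ν + 1 ∈ (1, 2]`. Since `s ↦ s ^ (p / 2)` is concave and subadditive on `[0, ∞)`, the
identity `t‖x‖² + (1-t)‖y‖² = ‖tx + (1-t)y‖² + t(1-t)‖x-y‖²` yields
`t‖x‖^p + (1-t)‖y‖^p ≤ ‖tx + (1-t)y‖^p + (t(1-t))^(p/2)‖x-y‖^p`; subtracting `C` times this from
the convexity inequality of `h + C‖·‖^p` gives the first bound.

As `(t(1-t))^(p/2) ≤ 1`, `h` is then convex up to the error `C‖x-y‖^p`, and because `p > 1` this
error improves to one of order `min t (1-t) ‖x-y‖^p`: the point at parameter `t` is the midpoint of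
`y` and the point at parameter `2t`, so halving `t` costs only `C(2t)^p‖x-y‖^p`, and these costs add
up geometrically on the way down from `[1/4, 1/2]`.
-/

open Set

section InnerProductSpace

variable {E : Type*} [NormedAddCommGroup E] [InnerProductSpace ℝ E]

lemma mul_norm_sq_add_mul_norm_sq (x y : E) (t : ℝ) :
    t * ‖x‖ ^ 2 + (1 - t) * ‖y‖ ^ 2 =
      ‖t • x + (1 - t) • y‖ ^ 2 + t * (1 - t) * ‖x - y‖ ^ 2 := by
  rw [norm_add_sq_real, norm_sub_sq_real, norm_smul, norm_smul, real_inner_smul_left,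
    real_inner_smul_right, Real.norm_eq_abs, Real.norm_eq_abs, mul_pow, mul_pow, sq_abs, sq_abs]
  ring

lemma mul_norm_rpow_add_mul_norm_rpow_le {p : ℝ} (hp₀ : 0 ≤ p) (hp₂ : p ≤ 2) (x y : E)
    {t : ℝ} (ht : t ∈ Icc (0 : ℝ) 1) :
    t * ‖x‖ ^ p + (1 - t) * ‖y‖ ^ p ≤
      ‖t • x + (1 - t) • y‖ ^ p + (t * (1 - t)) ^ (p / 2) * ‖x - y‖ ^ p := by
  have hq₀ : 0 ≤ p / 2 := by linarith
  have hq₁ : p / 2 ≤ 1 := by linarith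
  have hst : 0 ≤ t * (1 - t) := mul_nonneg ht.1 (by linarith [ht.2])
  have sq_rpow : ∀ a : ℝ, 0 ≤ a → (a ^ 2) ^ (p / 2) = a ^ p := fun a ha => by
    rw [← Real.rpow_natCast_mul ha, Nat.cast_ofNat, mul_div_cancel₀ p two_ne_zero]
  calc t * ‖x‖ ^ p + (1 - t) * ‖y‖ ^ p
      = t • (‖x‖ ^ 2) ^ (p / 2) + (1 - t) • (‖y‖ ^ 2) ^ (p / 2) := by
        simp only [smul_eq_mul, sq_rpow _ (norm_nonneg _)]
    _ ≤ (t • ‖x‖ ^ 2 + (1 - t) • ‖y‖ ^ 2) ^ (p / 2) :=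
        (Real.concaveOn_rpow hq₀ hq₁).2 (mem_Ici.2 (sq_nonneg _)) (mem_Ici.2 (sq_nonneg _)) ht.1
          (sub_nonneg.2 ht.2) (add_sub_cancel t 1)
    _ = (‖t • x + (1 - t) • y‖ ^ 2 + t * (1 - t) * ‖x - y‖ ^ 2) ^ (p / 2) := by
        simp only [smul_eq_mul, mul_norm_sq_add_mul_norm_sq]
    _ ≤ (‖t • x + (1 - t) • y‖ ^ 2) ^ (p / 2) + (t * (1 - t) * ‖x - y‖ ^ 2) ^ (p / 2) :=
        Real.rpow_add_le_add_rpow (sq_nonneg _) (mul_nonneg hst (sq_nonneg _)) hq₀ hq₁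
    _ = ‖t • x + (1 - t) • y‖ ^ p + (t * (1 - t)) ^ (p / 2) * ‖x - y‖ ^ p := by
        rw [Real.mul_rpow hst (sq_nonneg _), sq_rpow _ (norm_nonneg _), sq_rpow _ (norm_nonneg _)]

lemma le_of_convexOn_add_mul_norm_rpow {p C : ℝ} (hp₀ : 0 ≤ p) (hp₂ : p ≤ 2) (hC : 0 ≤ C)
    {f : E → ℝ} (hf : ConvexOn ℝ univ (fun x => f x + C * ‖x‖ ^ p)) (x y : E)
    {t : ℝ} (ht : t ∈ Icc (0 : ℝ) 1) :
    f (t • x + (1 - t) • y) ≤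
      t * f x + (1 - t) * f y + C * (t * (1 - t)) ^ (p / 2) * ‖x - y‖ ^ p := by
  have hconv := hf.2 (mem_univ x) (mem_univ y) ht.1 (sub_nonneg.2 ht.2) (add_sub_cancel t 1)
  simp only [smul_eq_mul] at hconv
  have hnorm := mul_le_mul_of_nonneg_left (mul_norm_rpow_add_mul_norm_rpow_le hp₀ hp₂ x y ht) hC
  linarith

end InnerProductSpace

/-- Comparison with `φ t = (4K + B) t - B t ^ p`, where `B = 2 ^ p K / (2 ^ (p - 1) - 1)` is
chosen so that `φ (2t) / 2 + K (2t) ^ p = φ t`; doubling `t` reaches `[1/4, 1/2]`, where `φ ≥ K`. -/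
lemma le_mul_of_le_half_add_rpow {g : ℝ → ℝ} {p K : ℝ} (hp : 1 < p) (hK : 0 ≤ K)
    (hbase : ∀ t ∈ Icc (1 / 4 : ℝ) (1 / 2), g t ≤ K)
    (hstep : ∀ t ∈ Ioc (0 : ℝ) (1 / 4), g t ≤ g (2 * t) / 2 + K * (2 * t) ^ p)
    {t : ℝ} (ht : t ∈ Ioc (0 : ℝ) (1 / 2)) :
    g t ≤ (4 + 2 ^ p / (2 ^ (p - 1) - 1)) * K * t := by
  have hq : 0 < (2 : ℝ) ^ (p - 1) - 1 := sub_pos.2 (Real.one_lt_rpow one_lt_two (by linarith))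
  have h2p : (2 : ℝ) ^ p = 2 * 2 ^ (p - 1) := by
    rw [Real.rpow_sub_one two_ne_zero]; ring
  set B := 2 ^ p / (2 ^ (p - 1) - 1) * K with hB_def
  have hB : 0 ≤ B := by positivity
  have hB_eq : B * 2 ^ (p - 1) - 2 * K * 2 ^ (p - 1) = B := by
    rw [hB_def, h2p]; field_simp; ring
  have hcompare : ∀ k : ℕ, ∀ s, 1 / 4 ≤ 2 ^ k * s → s ≤ 1 / 2 →
      g s ≤ (4 * K + B) * s - B * s ^ p := by
    intro k
    induction k with
    | zero =>
      intro s hs₁ hs₂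
      rw [pow_zero, one_mul] at hs₁
      have hsp : s ^ p ≤ s := Real.rpow_le_self_of_le_one (by linarith) (by linarith) hp.le
      nlinarith [hbase s ⟨hs₁, hs₂⟩]
    | succ k ih =>
      intro s hs₁ hs₂
      rcases le_or_gt s (1 / 4) with hs | hs
      · have hs₀ : 0 < s := pos_of_mul_pos_right (by linarith : 0 < 2 ^ (k + 1) * s) (by positivity)
        have hdouble := ih (2 * s) (by rw [pow_succ] at hs₁; linarith) (by linarith)
        have hpow : (2 * s) ^ p = 2 * 2 ^ (p - 1) * s ^ p := by
          rw [Real.mul_rpow zero_le_two hs₀.le, h2p]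
        rw [hpow] at hdouble
        have hhalf := hstep s ⟨hs₀, hs⟩
        rw [hpow] at hhalf
        linear_combination hhalf + hdouble / 2 - s ^ p * hB_eq
      · have hsp : s ^ p ≤ s := Real.rpow_le_self_of_le_one (by linarith) (by linarith) hp.le
        nlinarith [hbase s ⟨hs.le, hs₂⟩]
  obtain ⟨k, hk⟩ := pow_unbounded_of_one_lt (1 / (4 * t)) one_lt_two
  have hk' : 1 / 4 ≤ 2 ^ k * t := by
    rw [div_lt_iff₀ (by linarith [ht.1])] at hk; linarith
  calc g t ≤ (4 * K + B) * t - B * t ^ p := hcompare k t hk' ht.2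
    _ ≤ (4 * K + B) * t := by linarith [mul_nonneg hB (Real.rpow_nonneg ht.1.le p)]
    _ = (4 + 2 ^ p / (2 ^ (p - 1) - 1)) * K * t := by rw [hB_def]; ring

section NormedSpace

variable {E : Type*} [SeminormedAddCommGroup E] [NormedSpace ℝ E] {f : E → ℝ} {p K : ℝ}

lemma le_add_mul_mul_norm_rpow_of_le_half (hp : 1 < p) (hK : 0 ≤ K)
    (hf : ∀ x y : E, ∀ t ∈ Icc (0 : ℝ) 1,
      f (t • x + (1 - t) • y) ≤ t * f x + (1 - t) * f y + K * ‖x - y‖ ^ p)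
    (x y : E) {t : ℝ} (ht : t ∈ Icc (0 : ℝ) (1 / 2)) :
    f (t • x + (1 - t) • y) ≤
      t * f x + (1 - t) * f y + (4 + 2 ^ p / (2 ^ (p - 1) - 1)) * K * t * ‖x - y‖ ^ p := by
  rcases ht.1.eq_or_lt with rfl | ht₀
  · simp
  set g : ℝ → ℝ := fun s => f (s • x + (1 - s) • y) - s * f x - (1 - s) * f y
  have hD : 0 ≤ ‖x - y‖ ^ p := Real.rpow_nonneg (norm_nonneg _) p
  have hbase : ∀ s ∈ Icc (1 / 4 : ℝ) (1 / 2), g s ≤ K * ‖x - y‖ ^ p := fun s hs => by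
    have hfs := hf x y s ⟨by linarith [hs.1], by linarith [hs.2]⟩
    simp only [g]; linarith
  have hstep : ∀ s ∈ Ioc (0 : ℝ) (1 / 4),
      g s ≤ g (2 * s) / 2 + K * ‖x - y‖ ^ p * (2 * s) ^ p := fun s hs => by
    have hmid := hf ((2 * s) • x + (1 - 2 * s) • y) y (1 / 2) ⟨by norm_num, by norm_num⟩
    have hseg : (1 / 2 : ℝ) • ((2 * s) • x + (1 - 2 * s) • y) + (1 - 1 / 2 : ℝ) • y =
        s • x + (1 - s) • y := by module
    have hsub : (2 * s) • x + (1 - 2 * s) • y - y = (2 * s) • (x - y) := by module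
    rw [hseg, hsub, norm_smul, Real.norm_of_nonneg (by linarith [hs.1]),
      Real.mul_rpow (by linarith [hs.1]) (norm_nonneg _)] at hmid
    simp only [g]; linarith
  have hg := le_mul_of_le_half_add_rpow hp (mul_nonneg hK hD) hbase hstep ⟨ht₀, ht.2⟩
  simp only [g] at hg
  linarith

theorem exists_le_add_mul_min_mul_norm_rpow (hp : 1 < p) (hK : 0 ≤ K)
    (hf : ∀ x y : E, ∀ t ∈ Icc (0 : ℝ) 1,
      f (t • x + (1 - t) • y) ≤ t * f x + (1 - t) * f y + K * ‖x - y‖ ^ p) :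
    ∃ ρ : ℝ, 0 ≤ ρ ∧ ∀ x y : E, ∀ t ∈ Icc (0 : ℝ) 1,
      f (t • x + (1 - t) • y) ≤ t * f x + (1 - t) * f y + ρ * min t (1 - t) * ‖x - y‖ ^ p := by
  have hq : 0 < (2 : ℝ) ^ (p - 1) - 1 := sub_pos.2 (Real.one_lt_rpow one_lt_two (by linarith))
  refine ⟨(4 + 2 ^ p / (2 ^ (p - 1) - 1)) * K, by positivity, fun x y t ht => ?_⟩
  rcases le_or_gt t (1 / 2) with ht₂ | ht₂
  · rw [min_eq_left (by linarith)]
    exact le_add_mul_mul_norm_rpow_of_le_half hp hK hf x y ⟨ht.1, ht₂⟩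
  · have hswap := le_add_mul_mul_norm_rpow_of_le_half hp hK hf y x (t := 1 - t)
      ⟨by linarith [ht.2], by linarith⟩
    rw [norm_sub_rev, sub_sub_cancel, add_comm] at hswap
    rw [min_eq_right (by linarith)]
    linarith

end NormedSpace

/-- If `x ↦ h x + C‖x‖^(ν+1)` is convex (`0 < ν < 1`, `C ≥ 0`), then
`h(tx+(1-t)y) ≤ t h x + (1-t) h y + C (t(1-t))^((ν+1)/2) ‖x-y‖^(ν+1)`; in particular `h`
is `ν`-paraconvex on `ℝⁿ`. -/
theorem paraconvex_of_add_norm_rpow_convex {n : ℕ} (ν C : ℝ)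
    (hν : 0 < ν) (hν1 : ν < 1) (hC : 0 ≤ C)
    (h : EuclideanSpace ℝ (Fin n) → ℝ)
    (hconv : ConvexOn ℝ Set.univ (fun x => h x + C * ‖x‖ ^ (ν + 1))) :
    (∀ x y : EuclideanSpace ℝ (Fin n), ∀ t ∈ Set.Icc (0 : ℝ) 1,
        h (t • x + (1 - t) • y) ≤
          t * h x + (1 - t) * h y + C * (t * (1 - t)) ^ ((ν + 1) / 2) * ‖x - y‖ ^ (ν + 1))
      ∧
    (∃ ρ : ℝ, 0 ≤ ρ ∧ ∀ x y : EuclideanSpace ℝ (Fin n), ∀ t ∈ Set.Icc (0 : ℝ) 1,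
        h (t • x + (1 - t) • y) ≤
          t * h x + (1 - t) * h y + ρ * min t (1 - t) * ‖x - y‖ ^ (1 + ν)) := by
  have hbound : ∀ x y : EuclideanSpace ℝ (Fin n), ∀ t ∈ Set.Icc (0 : ℝ) 1,
      h (t • x + (1 - t) • y) ≤
        t * h x + (1 - t) * h y + C * (t * (1 - t)) ^ ((ν + 1) / 2) * ‖x - y‖ ^ (ν + 1) :=
    fun x y t ht => le_of_convexOn_add_mul_norm_rpow (by linarith) (by linarith) hC hconv x y ht
  refine ⟨hbound, ?_⟩
  rw [add_comm 1 ν]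
  refine exists_le_add_mul_min_mul_norm_rpow (by linarith) hC fun x y t ht =>
    (hbound x y t ht).trans ?_
  have hweight : (t * (1 - t)) ^ ((ν + 1) / 2) ≤ 1 :=
    Real.rpow_le_one (mul_nonneg ht.1 (sub_nonneg.2 ht.2)) (by nlinarith [ht.1, ht.2])
      (by linarith)
  gcongr
  exact mul_le_of_le_one_right hC hweight
end

section
/- Let ℐ ⊆ ℝ be an interval, let a, b ∈ ℐ with a < b, let ν ∈ (0,1] and C ≥ 0, and let φ : ℐ → ℝ satisfy φ(λs+(1−λ)t) ≤ λφ(s) + (1−λ)φ(t) + C·λ(1−λ)·|s−t|^{ν+1} for all λ ∈ [0,1] whenever s and t both lie in ℐ ∩ [a,+∞), and also whenever s and t both lie in ℐ ∩ (−∞,b]. Then φ(λs+(1−λ)t) ≤ λφ(s) + (1−λ)φ(t) + 3C·λ(1−λ)·|s−t|^{ν+1} for all s, t ∈ ℐ and λ ∈ [0,1]. -/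
/-!
Write the paraconvexity inequality at `x = λs + (1-λ)t` in the division-free form
`(t-s) φ x ≤ (t-x) φ s + (x-s) φ t + E (t-x)(x-s)`, with `E = C (t-s)^ν`. Only the case
`s < a < b < t` needs work, and by reflection we may take `x ≥ a`. The bound at `a` over
`[s,b]` and the bound at `b` over `[a,t]` eliminate `φ b` and give a bound at `a` over `[s,t]`
with error `2E`; substituting it into the bound at `x` over `[a,t]` gives error `3E`. All
error densities are bounded by `C (t-s)^ν` because `ν ≥ 0`.
-/

open Set

def ParaconvexOn (ν C : ℝ) (S : Set ℝ) (φ : ℝ → ℝ) : Prop :=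
  ∀ s ∈ S, ∀ t ∈ S, ∀ lam ∈ Icc (0 : ℝ) 1,
    φ (lam * s + (1 - lam) * t) ≤
      lam * φ s + (1 - lam) * φ t + C * (lam * (1 - lam)) * |s - t| ^ (ν + 1)

/-- For `u < v` and `w = λu + (1-λ)v`, this is `φ w ≤ λ φ u + (1-λ) φ v + E λ(1-λ)(v-u)`
multiplied by `v - u`. -/
def ChordBound (φ : ℝ → ℝ) (E u w v : ℝ) : Prop :=
  (v - u) * φ w ≤ (v - w) * φ u + (w - u) * φ v + E * (v - w) * (w - u)

namespace ChordBound

variable {φ : ℝ → ℝ} {E E' u p q w v : ℝ}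

theorem mono (h : ChordBound φ E u w v) (hE : E ≤ E') (huw : u ≤ w) (hwv : w ≤ v) :
    ChordBound φ E' u w v := by
  unfold ChordBound at *
  nlinarith [mul_le_mul_of_nonneg_right hE (mul_nonneg (sub_nonneg.2 hwv) (sub_nonneg.2 huw))]

theorem comp_neg_iff :
    ChordBound (fun y => φ (-y)) E (-v) (-w) (-u) ↔ ChordBound φ E u w v := by
  simp only [ChordBound, neg_neg]
  ring_nf

theorem overlap (hp : ChordBound φ E u p q) (hq : ChordBound φ E p q v) (hE : 0 ≤ E)
    (hup : u ≤ p) (hpq : p < q) (hqv : q ≤ v) : ChordBound φ (2 * E) u p v := by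
  unfold ChordBound at *
  have hslack : 0 ≤ E * (p - u) * (q - p) * (q - p) := by
    have := sub_nonneg.2 hup; have := sub_nonneg.2 hpq.le; positivity
  refine le_of_mul_le_mul_left ?_ (sub_pos.2 hpq)
  nlinarith [mul_le_mul_of_nonneg_left hp (by linarith : 0 ≤ v - p),
    mul_le_mul_of_nonneg_left hq (sub_nonneg.2 hup)]

theorem extend_left (hp : ChordBound φ E u p v) (hw : ChordBound φ E' p w v) (hE : 0 ≤ E)
    (hE' : 0 ≤ E') (hup : u ≤ p) (hpw : p ≤ w) (hwv : w ≤ v) (hpv : p < v) :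
    ChordBound φ (E + E') u w v := by
  unfold ChordBound at *
  have hvw := sub_nonneg.2 hwv
  have hwp := sub_nonneg.2 hpw
  have hpu := sub_nonneg.2 hup
  have hslackE : 0 ≤ E * (v - w) * (v - p) * (w - p) := by positivity
  have hslackE' : 0 ≤ E' * (v - w) * (v - w) * (p - u) := by positivity
  refine le_of_mul_le_mul_left ?_ (sub_pos.2 hpv)
  nlinarith [mul_le_mul_of_nonneg_left hp hvw,
    mul_le_mul_of_nonneg_left hw (by linarith : 0 ≤ v - u)]

theorem glue_right {s a b x t : ℝ} (ha : ChordBound φ E s a b) (hb : ChordBound φ E a b t)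
    (hx : ChordBound φ E a x t) (hE : 0 ≤ E) (hsa : s ≤ a) (hab : a < b) (hbt : b ≤ t)
    (hax : a ≤ x) (hxt : x ≤ t) : ChordBound φ (3 * E) s x t := by
  have h := (ha.overlap hb hE hsa hab hbt).extend_left hx (by positivity) hE hsa hax hxt
    (hab.trans_le hbt)
  rwa [show 2 * E + E = 3 * E by ring] at h

theorem glue_left {s a b x t : ℝ} (ha : ChordBound φ E s a b) (hb : ChordBound φ E a b t)
    (hx : ChordBound φ E s x b) (hE : 0 ≤ E) (hsa : s ≤ a) (hab : a < b) (hbt : b ≤ t)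
    (hsx : s ≤ x) (hxb : x ≤ b) : ChordBound φ (3 * E) s x t := by
  rw [← comp_neg_iff] at ha hb hx ⊢
  exact glue_right hb ha hx hE (neg_le_neg hbt) (neg_lt_neg hab) (neg_le_neg hsa)
    (neg_le_neg hxb) (neg_le_neg hsx)

end ChordBound

section

variable {ν C : ℝ} {S : Set ℝ} {φ : ℝ → ℝ}

theorem chordBound_iff_paraconvex {s t : ℝ} (hst : s < t) (lam : ℝ) :
    ChordBound φ (C * (t - s) ^ ν) s (lam * s + (1 - lam) * t) t ↔
      φ (lam * s + (1 - lam) * t) ≤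
        lam * φ s + (1 - lam) * φ t + C * (lam * (1 - lam)) * |s - t| ^ (ν + 1) := by
  have hts := sub_pos.2 hst
  set x := lam * s + (1 - lam) * t
  have hrhs : (t - x) * φ s + (x - s) * φ t + C * (t - s) ^ ν * (t - x) * (x - s) =
      (t - s) * (lam * φ s + (1 - lam) * φ t +
        C * (lam * (1 - lam)) * ((t - s) ^ ν * (t - s))) := by
    ring
  rw [abs_sub_comm, abs_of_pos hts, Real.rpow_add_one hts.ne', ChordBound, hrhs,
    mul_le_mul_iff_right₀ hts]

theorem ParaconvexOn.chordBound (h : ParaconvexOn ν C S φ) {u w v : ℝ} (hu : u ∈ S)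
    (hv : v ∈ S) (huv : u < v) (huw : u ≤ w) (hwv : w ≤ v) :
    ChordBound φ (C * (v - u) ^ ν) u w v := by
  have hvu := sub_pos.2 huv
  have hw : (v - w) / (v - u) * u + (1 - (v - w) / (v - u)) * v = w := by field_simp; ring
  have hlam : (v - w) / (v - u) ∈ Icc (0 : ℝ) 1 :=
    ⟨div_nonneg (by linarith) hvu.le, (div_le_one hvu).2 (by linarith)⟩
  rw [← hw, chordBound_iff_paraconvex huv]
  exact h u hu v hv _ hlam

theorem ParaconvexOn.chordBound_of_sub_le (h : ParaconvexOn ν C S φ) (hν : 0 ≤ ν)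
    (hC : 0 ≤ C) {u w v L : ℝ} (hu : u ∈ S) (hv : v ∈ S) (huv : u < v) (huw : u ≤ w)
    (hwv : w ≤ v) (hL : v - u ≤ L) : ChordBound φ (C * L ^ ν) u w v :=
  (h.chordBound hu hv huv huw hwv).mono
    (mul_le_mul_of_nonneg_left (Real.rpow_le_rpow (by linarith) hL hν) hC) huw hwv

theorem paraconvexOn_of_chordBound (hC : 0 ≤ C)
    (h : ∀ s ∈ S, ∀ t ∈ S, s < t → ∀ x, s ≤ x → x ≤ t →
      ChordBound φ (C * (t - s) ^ ν) s x t) :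
    ParaconvexOn ν C S φ := by
  intro s hs t ht lam ⟨hl0, hl1⟩
  rcases lt_trichotomy s t with hst | rfl | hts
  · rw [← chordBound_iff_paraconvex hst]
    exact h s hs t ht hst _ (by nlinarith) (by nlinarith)
  · have : 0 ≤ C * (lam * (1 - lam)) * |s - s| ^ (ν + 1) := by
      have := sub_nonneg.2 hl1; positivity
    rw [← add_mul, ← add_mul, add_sub_cancel, one_mul]
    linarith
  · have key := (chordBound_iff_paraconvex hts (1 - lam)).1
      (h t ht s hs hts _ (by nlinarith) (by nlinarith))
    rw [abs_sub_comm, sub_sub_cancel, add_comm ((1 - lam) * t)] at key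
    linarith

end

theorem paraconvex_glue_general {I : Set ℝ} {a b : ℝ}
    (ha : a ∈ I) (hb : b ∈ I) (hab : a < b) (ν C : ℝ)
    (hν : ν ∈ Set.Ioc (0 : ℝ) 1) (hC : 0 ≤ C) (φ : ℝ → ℝ)
    (h1 : ∀ s ∈ I ∩ Set.Ici a, ∀ t ∈ I ∩ Set.Ici a, ∀ lam ∈ Set.Icc (0 : ℝ) 1,
        φ (lam * s + (1 - lam) * t) ≤
          lam * φ s + (1 - lam) * φ t + C * (lam * (1 - lam)) * |s - t| ^ (ν + 1))
    (h2 : ∀ s ∈ I ∩ Set.Iic b, ∀ t ∈ I ∩ Set.Iic b, ∀ lam ∈ Set.Icc (0 : ℝ) 1,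
        φ (lam * s + (1 - lam) * t) ≤
          lam * φ s + (1 - lam) * φ t + C * (lam * (1 - lam)) * |s - t| ^ (ν + 1)) :
    ∀ s ∈ I, ∀ t ∈ I, ∀ lam ∈ Set.Icc (0 : ℝ) 1,
      φ (lam * s + (1 - lam) * t) ≤
        lam * φ s + (1 - lam) * φ t + 3 * C * (lam * (1 - lam)) * |s - t| ^ (ν + 1) := by
  have hR : ParaconvexOn ν C (I ∩ Ici a) φ := h1
  have hL : ParaconvexOn ν C (I ∩ Iic b) φ := h2
  refine paraconvexOn_of_chordBound (by positivity) fun s hs t ht hst x hsx hxt => ?_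
  have hE : 0 ≤ C * (t - s) ^ ν := mul_nonneg hC (Real.rpow_nonneg (sub_nonneg.2 hst.le) ν)
  have bound : ∀ {S}, ParaconvexOn ν C S φ → ∀ {u w v}, u ∈ S → v ∈ S → u < v → u ≤ w →
      w ≤ v → s ≤ u → v ≤ t → ChordBound φ (C * (t - s) ^ ν) u w v :=
    fun hS _ _ _ hu hv huv huw hwv hsu hvt =>
      hS.chordBound_of_sub_le hν.1.le hC hu hv huv huw hwv (by linarith)
  rw [mul_assoc]
  rcases le_or_gt a s with has | has
  · exact (bound hR ⟨hs, has⟩ ⟨ht, mem_Ici.2 (by linarith)⟩ hst hsx hxt le_rfl le_rfl).mono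
      (by linarith) hsx hxt
  rcases le_or_gt t b with htb | hbt
  · exact (bound hL ⟨hs, mem_Iic.2 (by linarith)⟩ ⟨ht, htb⟩ hst hsx hxt le_rfl le_rfl).mono
      (by linarith) hsx hxt
  have hsL : s ∈ I ∩ Iic b := ⟨hs, mem_Iic.2 (by linarith)⟩
  have hbL : b ∈ I ∩ Iic b := ⟨hb, self_mem_Iic⟩
  have haR : a ∈ I ∩ Ici a := ⟨ha, self_mem_Ici⟩
  have htR : t ∈ I ∩ Ici a := ⟨ht, mem_Ici.2 (by linarith)⟩
  have hsb := bound hL hsL hbL (has.trans hab) has.le hab.le le_rfl hbt.le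
  have hat := bound hR haR htR (hab.trans hbt) hab.le hbt.le has.le le_rfl
  rcases le_or_gt a x with hax | hxa
  · exact hsb.glue_right hat (bound hR haR htR (hab.trans hbt) hax hxt has.le le_rfl)
      hE has.le hab hbt.le hax hxt
  · exact hsb.glue_left hat (bound hL hsL hbL (has.trans hab) hsx (by linarith) le_rfl hbt.le)
      hE has.le hab hbt.le hsx (by linarith)

/-- If `φ` is `ν`-paraconvex (in the `λ(1-λ)` form, constant `C`) on
`ℐ ∩ [a,∞)` and on `ℐ ∩ (-∞,b]` where `a < b` in an interval `ℐ ⊆ ℝ`, then `φ` is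
`ν`-paraconvex on `ℐ` with constant `3C`. -/
theorem paraconvex_glue {I : Set ℝ} (hI : I.OrdConnected) {a b : ℝ}
    (ha : a ∈ I) (hb : b ∈ I) (hab : a < b) (ν C : ℝ)
    (hν : ν ∈ Set.Ioc (0 : ℝ) 1) (hC : 0 ≤ C) (φ : ℝ → ℝ)
    (h1 : ∀ s ∈ I ∩ Set.Ici a, ∀ t ∈ I ∩ Set.Ici a, ∀ lam ∈ Set.Icc (0 : ℝ) 1,
        φ (lam * s + (1 - lam) * t) ≤
          lam * φ s + (1 - lam) * φ t + C * (lam * (1 - lam)) * |s - t| ^ (ν + 1))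
    (h2 : ∀ s ∈ I ∩ Set.Iic b, ∀ t ∈ I ∩ Set.Iic b, ∀ lam ∈ Set.Icc (0 : ℝ) 1,
        φ (lam * s + (1 - lam) * t) ≤
          lam * φ s + (1 - lam) * φ t + C * (lam * (1 - lam)) * |s - t| ^ (ν + 1)) :
    ∀ s ∈ I, ∀ t ∈ I, ∀ lam ∈ Set.Icc (0 : ℝ) 1,
      φ (lam * s + (1 - lam) * t) ≤
        lam * φ s + (1 - lam) * φ t + 3 * C * (lam * (1 - lam)) * |s - t| ^ (ν + 1) :=
  paraconvex_glue_general ha hb hab ν C hν hC φ h1 h2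
end

section
/- Let ν ∈ (0,1], let U ⊆ ℝⁿ be an open set, and let S ⊆ U be a nonempty convex compact set. Suppose h : U → ℝ is ν-weakly convex, i.e., h is locally Lipschitz on U and for every x₀ ∈ U there exist δ > 0 with B(x₀;δ) ⊆ U and C ≥ 0 such that h(λx+(1−λ)y) ≤ λh(x) + (1−λ)h(y) + C·λ(1−λ)·‖x−y‖^{1+ν} for all x, y ∈ B(x₀;δ) and λ ∈ [0,1]. Then h is ν-paraconvex on S: there exists ρ ≥ 0 such that h(λx+(1−λ)y) ≤ λh(x) + (1−λ)h(y) + ρ·λ(1−λ)·‖x−y‖^{1+ν} for all x, y ∈ S and λ ∈ [0,1]. -/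
/-- A `ν`-weakly convex function (locally Lipschitz on an open set `U`,
locally satisfying the paraconvexity inequality with factor `λ(1-λ)`) is `ν`-paraconvex
on every nonempty convex compact `S ⊆ U`. -/
theorem paraconvex_of_weakly_convex {n : ℕ} (ν : ℝ) (hν : ν ∈ Set.Ioc (0 : ℝ) 1)
    (U : Set (EuclideanSpace ℝ (Fin n))) (hU : IsOpen U)
    (S : Set (EuclideanSpace ℝ (Fin n))) (hSU : S ⊆ U)
    (hSne : S.Nonempty) (hScv : Convex ℝ S) (hScp : IsCompact S)
    (h : EuclideanSpace ℝ (Fin n) → ℝ)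
    (hlip : LocallyLipschitzOn U h)
    (hweak : ∀ x₀ ∈ U, ∃ δ > (0 : ℝ), Metric.ball x₀ δ ⊆ U ∧ ∃ C : ℝ, 0 ≤ C ∧
        ∀ x ∈ Metric.ball x₀ δ, ∀ y ∈ Metric.ball x₀ δ, ∀ t ∈ Set.Icc (0 : ℝ) 1,
          h (t • x + (1 - t) • y) ≤
            t * h x + (1 - t) * h y + C * (t * (1 - t)) * ‖x - y‖ ^ (1 + ν)) :
    ∃ ρ : ℝ, 0 ≤ ρ ∧ ∀ x ∈ S, ∀ y ∈ S, ∀ t ∈ Set.Icc (0 : ℝ) 1,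
      h (t • x + (1 - t) • y) ≤
        t * h x + (1 - t) * h y + ρ * (t * (1 - t)) * ‖x - y‖ ^ (1 + ν) := by
  classical
  -- Step 1: for each point, a single radius with both properties
  have key : ∀ x : EuclideanSpace ℝ (Fin n), ∃ r : ℝ, 0 < r ∧ ∃ C : ℝ, 0 ≤ C ∧ ∃ K : ℝ, 0 ≤ K ∧
      (x ∈ U → ((∀ a ∈ Metric.ball x r, ∀ b ∈ Metric.ball x r, ∀ t ∈ Set.Icc (0:ℝ) 1,
          h (t • a + (1 - t) • b) ≤ t * h a + (1 - t) * h b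
            + C * (t * (1 - t)) * ‖a - b‖ ^ (1 + ν)) ∧
        (∀ a ∈ Metric.ball x r, ∀ b ∈ Metric.ball x r,
          dist (h a) (h b) ≤ K * dist a b))) := by
    intro x
    by_cases hx : x ∈ U
    · obtain ⟨δ, hδ, hδU, C, hC, hineq⟩ := hweak x hx
      obtain ⟨K, t, ht, hK⟩ := hlip hx
      have hUx : U ∈ nhds x := hU.mem_nhds hx
      have ht' : t ∩ U ∈ nhds x := by
        rw [nhdsWithin_eq_nhds.mpr hUx] at ht
        exact Filter.inter_mem ht hUx
      obtain ⟨ε, hε, hεsub⟩ := Metric.mem_nhds_iff.mp ht'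
      refine ⟨min δ ε, lt_min hδ hε, C, hC, K, K.coe_nonneg, fun _ => ⟨?_, ?_⟩⟩
      · intro a ha b hb s hs
        exact hineq a (Metric.ball_subset_ball (min_le_left _ _) ha)
          b (Metric.ball_subset_ball (min_le_left _ _) hb) s hs
      · intro a ha b hb
        have hsub : Metric.ball x (min δ ε) ⊆ t :=
          (Metric.ball_subset_ball (min_le_right _ _)).trans
            (hεsub.trans (Set.inter_subset_left))
        exact hK.dist_le_mul a (hsub ha) b (hsub hb)
    · exact ⟨1, one_pos, 0, le_refl _, 0, le_refl _, fun hx' => absurd hx' hx⟩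
  choose r hr C hC K hK hprop using key
  -- Step 2: finite subcover
  obtain ⟨F, hFS, hFcov⟩ := hScp.elim_nhds_subcover (fun x => Metric.ball x (r x / 2))
    (fun x _ => Metric.ball_mem_nhds x (half_pos (hr x)))
  have hFne : F.Nonempty := by
    obtain ⟨a, ha⟩ := hSne
    have := hFcov ha
    simp only [Set.mem_iUnion] at this
    obtain ⟨x, hx, _⟩ := this
    exact ⟨x, hx⟩
  set r₀ : ℝ := F.inf' hFne (fun x => r x / 2) with hr₀def
  set C₀ : ℝ := F.sup' hFne C with hC₀def
  set K₀ : ℝ := F.sup' hFne K with hK₀def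
  have hr₀ : 0 < r₀ := by
    rw [hr₀def, Finset.lt_inf'_iff]
    intro b hb; exact half_pos (hr b)
  have hC₀ : 0 ≤ C₀ := by
    obtain ⟨x, hx⟩ := hFne
    exact le_trans (hC x) (Finset.le_sup' C hx)
  have hK₀ : 0 ≤ K₀ := by
    obtain ⟨x, hx⟩ := hFne
    exact le_trans (hK x) (Finset.le_sup' K hx)
  -- Lemma A: nearby points lie in a common good ball
  have lemA : ∀ a ∈ S, ∀ b : EuclideanSpace ℝ (Fin n), dist a b < r₀ →
      ∃ x ∈ F, a ∈ Metric.ball x (r x) ∧ b ∈ Metric.ball x (r x) := by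
    intro a ha b hab
    have := hFcov ha
    simp only [Set.mem_iUnion] at this
    obtain ⟨x, hxF, hax⟩ := this
    refine ⟨x, hxF, Metric.ball_subset_ball (by linarith [hr x]) hax, ?_⟩
    have h1 : dist a x < r x / 2 := hax
    have h2 : r₀ ≤ r x / 2 := Finset.inf'_le _ hxF
    have h3 : dist b x ≤ dist b a + dist a x := dist_triangle b a x
    rw [Metric.mem_ball]
    rw [dist_comm] at hab
    linarith
  -- Lemma B: uniform local Lipschitz
  have lemB : ∀ a ∈ S, ∀ b ∈ S, dist a b < r₀ → dist (h a) (h b) ≤ K₀ * dist a b := by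
    intro a ha b hb hab
    obtain ⟨x, hxF, hax, hbx⟩ := lemA a ha b hab
    have hx := (hprop x (hSU (hFS x hxF))).2 a hax b hbx
    calc dist (h a) (h b) ≤ K x * dist a b := hx
      _ ≤ K₀ * dist a b := mul_le_mul_of_nonneg_right (Finset.le_sup' K hxF) dist_nonneg
  -- Lemma C: global Lipschitz on S by subdivision
  have lemC : ∀ a ∈ S, ∀ b ∈ S, dist (h a) (h b) ≤ K₀ * dist a b := by
    intro a ha b hb
    obtain ⟨N, hN⟩ := exists_nat_gt (dist a b / r₀)
    set M := N + 1 with hM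
    have hMpos : 0 < (M : ℝ) := by positivity
    have hM0 : (M : ℝ) ≠ 0 := ne_of_gt hMpos
    have hstep : dist a b / (M : ℝ) < r₀ := by
      rw [div_lt_iff₀ hMpos]
      have h1 : dist a b / r₀ < (M : ℝ) := by
        refine lt_of_lt_of_le hN ?_
        push_cast [hM]; linarith
      calc dist a b = (dist a b / r₀) * r₀ := by field_simp
        _ < (M : ℝ) * r₀ := mul_lt_mul_of_pos_right h1 hr₀
        _ = r₀ * (M : ℝ) := by ring
    set p : ℕ → EuclideanSpace ℝ (Fin n) :=
      fun i => ((i : ℝ) / M) • b + (1 - (i : ℝ) / M) • a with hp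
    have hpmem : ∀ i ≤ M, p i ∈ S := by
      intro i hi
      have h1 : (0:ℝ) ≤ (i : ℝ) / M := by positivity
      have h2 : (i : ℝ) / M ≤ 1 := by
        rw [div_le_one hMpos]; exact_mod_cast hi
      exact hScv hb ha h1 (by linarith) (by ring)
    have hpdist : ∀ i : ℕ, dist (p i) (p (i + 1)) = dist a b / M := by
      intro i
      have he : p (i+1) - p i = ((1:ℝ) / M) • (b - a) := by
        simp only [hp]
        push_cast
        module
      rw [dist_eq_norm, ← neg_sub (p (i+1)) (p i), norm_neg, he, norm_smul, dist_eq_norm,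
        ← neg_sub b a, norm_neg]
      rw [Real.norm_eq_abs, abs_of_pos (by positivity : (0:ℝ) < 1 / (M:ℝ))]
      ring
    have htel : h b - h a = ∑ i ∈ Finset.range M, (h (p (i+1)) - h (p i)) := by
      rw [Finset.sum_range_sub (fun i => h (p i))]
      have hb' : p M = b := by
        simp only [hp]
        rw [div_self hM0]
        simp
      have ha' : p 0 = a := by simp [hp]
      rw [hb', ha']
    have hbound : ∀ i ∈ Finset.range M, |h (p (i+1)) - h (p i)| ≤ K₀ * (dist a b / M) := by
      intro i hi
      rw [Finset.mem_range] at hi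
      have h1 : p i ∈ S := hpmem i (le_of_lt hi)
      have h2 : p (i+1) ∈ S := hpmem (i+1) hi
      have h3 : dist (p (i+1)) (p i) < r₀ := by
        rw [dist_comm, hpdist i]; exact hstep
      have h4 := lemB _ h2 _ h1 h3
      rw [Real.dist_eq] at h4
      rw [dist_comm, hpdist] at h4
      exact h4
    rw [Real.dist_eq]
    calc |h a - h b| = |h b - h a| := abs_sub_comm _ _
      _ = |∑ i ∈ Finset.range M, (h (p (i+1)) - h (p i))| := by rw [htel]
      _ ≤ ∑ i ∈ Finset.range M, |h (p (i+1)) - h (p i)| := Finset.abs_sum_le_sum_abs _ _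
      _ ≤ ∑ _i ∈ Finset.range M, K₀ * (dist a b / M) := Finset.sum_le_sum hbound
      _ = (M : ℝ) * (K₀ * (dist a b / M)) := by
          rw [Finset.sum_const, Finset.card_range, nsmul_eq_mul]
      _ = K₀ * dist a b := by field_simp
  -- Final: choose ρ
  refine ⟨max C₀ (2 * K₀ / r₀ ^ ν), le_trans hC₀ (le_max_left _ _), ?_⟩
  intro x hx y hy t ht
  obtain ⟨ht0, ht1⟩ := ht
  have hrpow_nn : (0:ℝ) ≤ ‖x - y‖ ^ (1 + ν) := Real.rpow_nonneg (norm_nonneg _) _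
  have htfac : (0:ℝ) ≤ t * (1 - t) := mul_nonneg ht0 (by linarith)
  by_cases hnear : dist x y < r₀
  · obtain ⟨x₀, hx₀F, hxb, hyb⟩ := lemA x hx y hnear
    have hloc := (hprop x₀ (hSU (hFS x₀ hx₀F))).1 x hxb y hyb t ⟨ht0, ht1⟩
    refine le_trans hloc ?_
    have hCle : C x₀ ≤ max C₀ (2 * K₀ / r₀ ^ ν) :=
      le_trans (Finset.le_sup' C hx₀F) (le_max_left _ _)
    have hmul : C x₀ * (t * (1 - t)) * ‖x - y‖ ^ (1 + ν)
        ≤ max C₀ (2 * K₀ / r₀ ^ ν) * (t * (1 - t)) * ‖x - y‖ ^ (1 + ν) := by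
      apply mul_le_mul_of_nonneg_right _ hrpow_nn
      exact mul_le_mul_of_nonneg_right hCle htfac
    linarith
  · push_neg at hnear
    set z := t • x + (1 - t) • y with hz
    have hzS : z ∈ S := hScv hx hy ht0 (by linarith) (by ring)
    have hzx : dist z x = (1 - t) * ‖x - y‖ := by
      rw [dist_eq_norm]
      have he : z - x = (1 - t) • (y - x) := by
        simp only [hz]; module
      rw [he, norm_smul, ← neg_sub x y, norm_neg]
      rw [Real.norm_eq_abs, abs_of_nonneg (by linarith : (0:ℝ) ≤ 1 - t)]
    have hzy : dist z y = t * ‖x - y‖ := by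
      rw [dist_eq_norm]
      have he : z - y = t • (x - y) := by
        simp only [hz]; module
      rw [he, norm_smul, Real.norm_eq_abs, abs_of_nonneg ht0]
    have h1 : h z - h x ≤ K₀ * ((1 - t) * ‖x - y‖) := by
      have h4 := lemC z hzS x hx
      rw [Real.dist_eq, hzx] at h4
      exact le_trans (le_abs_self _) h4
    have h2 : h z - h y ≤ K₀ * (t * ‖x - y‖) := by
      have h4 := lemC z hzS y hy
      rw [Real.dist_eq, hzy] at h4
      exact le_trans (le_abs_self _) h4
    have hdist : r₀ ≤ ‖x - y‖ := by rwa [dist_eq_norm] at hnear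
    have hnormpos : 0 < ‖x - y‖ := lt_of_lt_of_le hr₀ hdist
    have hpowkey : ‖x - y‖ ≤ ‖x - y‖ ^ (1 + ν) / r₀ ^ ν := by
      rw [le_div_iff₀ (Real.rpow_pos_of_pos hr₀ ν)]
      calc ‖x - y‖ * r₀ ^ ν ≤ ‖x - y‖ * ‖x - y‖ ^ ν := by
            apply mul_le_mul_of_nonneg_left _ (norm_nonneg _)
            exact Real.rpow_le_rpow (le_of_lt hr₀) hdist (le_of_lt hν.1)
        _ = ‖x - y‖ ^ (1 + ν) := by
            rw [Real.rpow_add hnormpos, Real.rpow_one]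
    have hmain : h z - (t * h x + (1 - t) * h y)
        ≤ 2 * K₀ * (t * (1 - t)) * ‖x - y‖ := by
      have e1 : h z - (t * h x + (1 - t) * h y)
          = t * (h z - h x) + (1 - t) * (h z - h y) := by ring
      rw [e1]
      have b1 : t * (h z - h x) ≤ t * (K₀ * ((1 - t) * ‖x - y‖)) :=
        mul_le_mul_of_nonneg_left h1 ht0
      have b2 : (1 - t) * (h z - h y) ≤ (1 - t) * (K₀ * (t * ‖x - y‖)) :=
        mul_le_mul_of_nonneg_left h2 (by linarith)
      calc t * (h z - h x) + (1 - t) * (h z - h y)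
          ≤ t * (K₀ * ((1 - t) * ‖x - y‖)) + (1 - t) * (K₀ * (t * ‖x - y‖)) := by linarith
        _ = 2 * K₀ * (t * (1 - t)) * ‖x - y‖ := by ring
    have hfin : 2 * K₀ * (t * (1 - t)) * ‖x - y‖
        ≤ max C₀ (2 * K₀ / r₀ ^ ν) * (t * (1 - t)) * ‖x - y‖ ^ (1 + ν) := by
      have step1 : 2 * K₀ * (t * (1 - t)) * ‖x - y‖
          ≤ 2 * K₀ * (t * (1 - t)) * (‖x - y‖ ^ (1 + ν) / r₀ ^ ν) := by
        apply mul_le_mul_of_nonneg_left hpowkey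
        positivity
      have step2 : 2 * K₀ * (t * (1 - t)) * (‖x - y‖ ^ (1 + ν) / r₀ ^ ν)
          = (2 * K₀ / r₀ ^ ν) * (t * (1 - t)) * ‖x - y‖ ^ (1 + ν) := by ring
      rw [step2] at step1
      refine le_trans step1 ?_
      apply mul_le_mul_of_nonneg_right _ hrpow_nn
      exact mul_le_mul_of_nonneg_right (le_max_right _ _) htfac
    linarith
end

section
/- Let ν ∈ (0,1], ρ ≥ 0, let S ⊆ ℝⁿ be a convex set, and let h : ℝⁿ → ℝ be ν-paraconvex on S with constant ρ. Then h is locally bounded on the interior of S, and h is locally Lipschitz on the interior of S. -/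
open Metric Set

/-- Jensen-type inequality for paraconvex functions: the value at a convex combination is
bounded by the combination of values plus an error proportional to the number of points. -/
lemma para_jensen {E : Type*} [NormedAddCommGroup E] [NormedSpace ℝ E]
    {ρ ν : ℝ} (hρ : 0 ≤ ρ) (hν : 0 ≤ 1 + ν) {A : Set E} (hA : Convex ℝ A)
    {D : ℝ} (hD0 : 0 ≤ D) (hD : ∀ x ∈ A, ∀ y ∈ A, ‖x - y‖ ≤ D)
    {h : E → ℝ}
    (hpara : ∀ x ∈ A, ∀ y ∈ A, ∀ t ∈ Set.Icc (0:ℝ) 1,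
        h (t • x + (1 - t) • y) ≤
          t * h x + (1 - t) * h y + ρ * min t (1 - t) * ‖x - y‖ ^ (1 + ν)) :
    ∀ (ι : Type*) (t : Finset ι) (w : ι → ℝ) (p : ι → E), (∀ i ∈ t, 0 ≤ w i) →
      (∑ i ∈ t, w i) = 1 → (∀ i ∈ t, p i ∈ A) →
      h (∑ i ∈ t, w i • p i) ≤ (∑ i ∈ t, w i * h (p i)) + ρ * t.card * D ^ (1 + ν) := by
  intro ι t
  classical
  induction t using Finset.induction_on with
  | empty => intro w p _ hsum _; simp at hsum
  | @insert a s ha ih =>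
    intro w p hw hsum hp
    have hDp : (0:ℝ) ≤ D ^ (1 + ν) := Real.rpow_nonneg hD0 _
    have hwa0 : 0 ≤ w a := hw a (Finset.mem_insert_self a s)
    have hws : ∀ i ∈ s, 0 ≤ w i := fun i hi => hw i (Finset.mem_insert_of_mem hi)
    have hps : ∀ i ∈ s, p i ∈ A := fun i hi => hp i (Finset.mem_insert_of_mem hi)
    rw [Finset.sum_insert ha] at hsum
    set c := ∑ i ∈ s, w i with hcdef
    have hc0 : 0 ≤ c := Finset.sum_nonneg hws
    rw [Finset.sum_insert ha, Finset.sum_insert ha, Finset.card_insert_of_notMem ha]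
    by_cases hc : c = 0
    · -- degenerate case : all the mass is on `a`
      have hall : ∀ i ∈ s, w i = 0 :=
        (Finset.sum_eq_zero_iff_of_nonneg hws).1 hc
      have hwa1 : w a = 1 := by rw [hc] at hsum; linarith
      have h1 : ∑ i ∈ s, w i • p i = 0 :=
        Finset.sum_eq_zero fun i hi => by rw [hall i hi, zero_smul]
      have h2 : ∑ i ∈ s, w i * h (p i) = 0 :=
        Finset.sum_eq_zero fun i hi => by rw [hall i hi, zero_mul]
      rw [h1, h2, hwa1, one_smul, add_zero, one_mul, add_zero]
      have hcard : (0:ℝ) ≤ ρ * (↑s.card + 1) * D ^ (1 + ν) := by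
        have : (0:ℝ) ≤ (↑s.card + 1 : ℝ) := by positivity
        exact mul_nonneg (mul_nonneg hρ this) hDp
      push_cast
      linarith
    · have hcpos : 0 < c := lt_of_le_of_ne hc0 (Ne.symm hc)
      have hcle1 : c ≤ 1 := by linarith
      have hwale1 : w a ≤ 1 := by linarith
      set q := ∑ i ∈ s, (w i / c) • p i with hqdef
      have hwq0 : ∀ i ∈ s, 0 ≤ w i / c := fun i hi => div_nonneg (hws i hi) hc0
      have hwq1 : ∑ i ∈ s, w i / c = 1 := by
        rw [← Finset.sum_div, ← hcdef, div_self hc]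
      have hq : q ∈ A := hA.sum_mem hwq0 hwq1 hps
      have hcq : c • q = ∑ i ∈ s, w i • p i := by
        rw [hqdef, Finset.smul_sum]
        refine Finset.sum_congr rfl fun i hi => ?_
        rw [smul_smul]
        congr 1
        field_simp
      have hc1 : 1 - w a = c := by linarith
      have main := hpara (p a) (hp a (Finset.mem_insert_self a s)) q hq (w a)
        ⟨hwa0, hwale1⟩
      rw [hc1] at main
      -- bound the error term
      have hnle : ‖p a - q‖ ^ (1 + ν) ≤ D ^ (1 + ν) :=
        Real.rpow_le_rpow (norm_nonneg _) (hD _ (hp a (Finset.mem_insert_self a s)) _ hq) hν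
      have hmin0 : 0 ≤ min (w a) c := le_min hwa0 hc0
      have hminle : min (w a) c ≤ 1 := le_trans (min_le_left _ _) hwale1
      have herr : ρ * min (w a) c * ‖p a - q‖ ^ (1 + ν) ≤ ρ * D ^ (1 + ν) := by
        calc ρ * min (w a) c * ‖p a - q‖ ^ (1 + ν)
            ≤ ρ * 1 * D ^ (1 + ν) :=
              mul_le_mul (by nlinarith) hnle (Real.rpow_nonneg (norm_nonneg _) _)
                (by linarith)
          _ = ρ * D ^ (1 + ν) := by ring
      -- bound `c * h q` using the induction hypothesis
      have ihq := ih (fun i => w i / c) p hwq0 hwq1 hps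
      have hchq : c * h q ≤ (∑ i ∈ s, w i * h (p i)) + ρ * ↑s.card * D ^ (1 + ν) := by
        have h1 : c * h q ≤ c * ((∑ i ∈ s, (w i / c) * h (p i)) + ρ * ↑s.card * D ^ (1 + ν)) :=
          mul_le_mul_of_nonneg_left ihq hc0
        have h2 : c * ∑ i ∈ s, (w i / c) * h (p i) = ∑ i ∈ s, w i * h (p i) := by
          rw [Finset.mul_sum]
          refine Finset.sum_congr rfl fun i hi => ?_
          field_simp
        have h3 : c * (ρ * ↑s.card * D ^ (1 + ν)) ≤ ρ * ↑s.card * D ^ (1 + ν) := by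
          have hnn : (0:ℝ) ≤ ρ * ↑s.card * D ^ (1 + ν) := by
            exact mul_nonneg (mul_nonneg hρ (by positivity)) hDp
          nlinarith
        calc c * h q ≤ c * (∑ i ∈ s, (w i / c) * h (p i)) + c * (ρ * ↑s.card * D ^ (1 + ν)) := by
              rw [← mul_add]; exact h1
          _ ≤ (∑ i ∈ s, w i * h (p i)) + ρ * ↑s.card * D ^ (1 + ν) := by
              rw [h2]; linarith
      rw [← hcq]
      push_cast
      have hfinal : ρ * (↑s.card + 1) * D ^ (1 + ν)
          = ρ * ↑s.card * D ^ (1 + ν) + ρ * D ^ (1 + ν) := by ring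
      linarith [main, hchq, herr]

/-- A `ν`-paraconvex function on a convex set `S ⊆ ℝⁿ` is locally
bounded and locally Lipschitz on the interior of `S`. -/
theorem paraconvex_locallyBounded_locallyLipschitz {n : ℕ} (ν ρ : ℝ)
    (hν : ν ∈ Set.Ioc (0 : ℝ) 1) (hρ : 0 ≤ ρ)
    (S : Set (EuclideanSpace ℝ (Fin n))) (hS : Convex ℝ S)
    (h : EuclideanSpace ℝ (Fin n) → ℝ)
    (hpara : ∀ x ∈ S, ∀ y ∈ S, ∀ t ∈ Set.Icc (0 : ℝ) 1,
        h (t • x + (1 - t) • y) ≤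
          t * h x + (1 - t) * h y + ρ * min t (1 - t) * ‖x - y‖ ^ (1 + ν)) :
    (∀ x ∈ interior S, ∃ ε > (0 : ℝ), ∃ M : ℝ,
        ∀ y ∈ Metric.ball x ε, |h y| ≤ M) ∧
    LocallyLipschitzOn (interior S) h := by
  obtain ⟨hν0, hν1⟩ := hν
  have hν' : (0:ℝ) ≤ 1 + ν := by linarith
  -- Key local boundedness claim
  classical
  have key : ∀ x ∈ interior S, ∃ ε > (0:ℝ), ∃ M : ℝ,
      Metric.ball x ε ⊆ S ∧ ∀ y ∈ Metric.ball x ε, |h y| ≤ M := by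
    intro x hx
    obtain ⟨r, hr0, hrS⟩ : ∃ r > (0:ℝ), closedBall x r ⊆ S := by
      obtain ⟨r, hr0, hrS⟩ := Metric.mem_nhds_iff.1 (mem_interior_iff_mem_nhds.1 hx)
      exact ⟨r/2, by positivity, (closedBall_subset_ball (by linarith)).trans hrS⟩
    obtain ⟨b, hxb, hbS⟩ := exists_mem_interior_convexHull_affineBasis
      (Metric.closedBall_mem_nhds x hr0)
    set T : Set (EuclideanSpace ℝ (Fin n)) := convexHull ℝ (Set.range b) with hT
    have hTball : T ⊆ closedBall x r := hbS
    have hTS : T ⊆ S := hTball.trans hrS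
    have hTconv : Convex ℝ T := convex_convexHull ℝ _
    have hD : ∀ u ∈ T, ∀ v ∈ T, ‖u - v‖ ≤ 2 * r := by
      intro u hu v hv
      have h1 : ‖u - x‖ ≤ r := mem_closedBall_iff_norm.1 (hTball hu)
      have h2 : ‖v - x‖ ≤ r := mem_closedBall_iff_norm.1 (hTball hv)
      calc ‖u - v‖ ≤ ‖u - x‖ + ‖x - v‖ := norm_sub_le_norm_sub_add_norm_sub u x v
        _ = ‖u - x‖ + ‖v - x‖ := by rw [norm_sub_rev x v]
        _ ≤ 2 * r := by linarith
    have hparaT : ∀ u ∈ T, ∀ v ∈ T, ∀ t ∈ Set.Icc (0:ℝ) 1,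
        h (t • u + (1 - t) • v) ≤
          t * h u + (1 - t) * h v + ρ * min t (1 - t) * ‖u - v‖ ^ (1 + ν) :=
      fun u hu v hv => hpara u (hTS hu) v (hTS hv)
    -- finite set of vertices
    set F : Finset (EuclideanSpace ℝ (Fin n)) := Finset.univ.image b with hF
    have hFT : (↑F : Set (EuclideanSpace ℝ (Fin n))) = Set.range b := by
      simp [hF]
    have hFne : F.Nonempty := ⟨b 0, by simp [hF]⟩
    set M₀ : ℝ := F.sup' hFne h with hM₀
    set M₁ : ℝ := M₀ + ρ * F.card * (2 * r) ^ (1 + ν) with hM₁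
    have hub : ∀ y ∈ T, h y ≤ M₁ := by
      intro y hy
      rw [hT, ← hFT, F.convexHull_eq] at hy
      obtain ⟨w, hw0, hw1, hwy⟩ := hy
      have hmem : ∀ z ∈ F, z ∈ T := by
        intro z hz
        exact subset_convexHull ℝ _ (by rw [← hFT]; exact_mod_cast hz)
      have hj := para_jensen hρ hν' hTconv (by positivity) hD hparaT
        (EuclideanSpace ℝ (Fin n)) F w id hw0 hw1 hmem
      have hsum : ∑ i ∈ F, w i • id i = y := by
        rw [← Finset.centerMass_eq_of_sum_1 F id hw1, hwy]
      rw [hsum] at hj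
      have hbound : ∑ i ∈ F, w i * h (id i) ≤ M₀ := by
        calc ∑ i ∈ F, w i * h (id i) ≤ ∑ i ∈ F, w i * M₀ :=
              Finset.sum_le_sum fun i hi =>
                mul_le_mul_of_nonneg_left (Finset.le_sup' h hi) (hw0 i hi)
          _ = M₀ := by rw [← Finset.sum_mul, hw1, one_mul]
      rw [hM₁]
      linarith
    -- radius of a ball inside the interior of the simplex
    obtain ⟨ε, hε0, hεT⟩ := Metric.isOpen_iff.1 isOpen_interior x hxb
    have hballT : Metric.ball x ε ⊆ T := hεT.trans interior_subset
    have hballS : Metric.ball x ε ⊆ S := hballT.trans hTS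
    -- lower bound by reflection
    set m : ℝ := 2 * h x - M₁ - ρ * (2 * r) ^ (1 + ν) with hm
    have hlb : ∀ y ∈ Metric.ball x ε, m ≤ h y := by
      intro y hy
      set z : EuclideanSpace ℝ (Fin n) := (2:ℝ) • x - y with hz
      have hzball : z ∈ Metric.ball x ε := by
        rw [mem_ball_iff_norm]
        have : z - x = x - y := by rw [hz]; module
        rw [this, norm_sub_rev]
        exact mem_ball_iff_norm.1 hy
      have hyT : y ∈ T := hballT hy
      have hzT : z ∈ T := hballT hzball
      have hcomb : (1/2 : ℝ) • y + (1 - 1/2 : ℝ) • z = x := by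
        rw [hz]; norm_num; module
      have hp := hparaT y hyT z hzT (1/2) ⟨by norm_num, by norm_num⟩
      rw [hcomb] at hp
      have hminhalf : min (1/2 : ℝ) (1 - 1/2) = 1/2 := by norm_num
      rw [hminhalf] at hp
      have hnle : ‖y - z‖ ^ (1 + ν) ≤ (2*r) ^ (1 + ν) :=
        Real.rpow_le_rpow (norm_nonneg _) (hD _ hyT _ hzT) hν'
      have herr : ρ * ‖y - z‖ ^ (1 + ν) ≤ ρ * (2*r) ^ (1 + ν) :=
        mul_le_mul_of_nonneg_left hnle hρ
      have hzub : h z ≤ M₁ := hub z hzT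
      rw [hm]
      linarith
    refine ⟨ε, hε0, max M₁ (-m), hballS, ?_⟩
    · intro y hy
      rw [abs_le]
      constructor
      · have := hlb y hy
        have := le_max_right M₁ (-m)
        linarith
      · exact le_trans (hub y (hballT hy)) (le_max_left _ _)
  constructor
  · intro x hx
    obtain ⟨ε, hε0, M, _, hbd⟩ := key x hx
    exact ⟨ε, hε0, M, hbd⟩
  · intro x hx
    obtain ⟨ε, hε0, M, hsub, hbd⟩ := key x hx
    have hM0 : (0:ℝ) ≤ M := le_trans (abs_nonneg _) (hbd x (mem_ball_self hε0))
    set K : ℝ := 2/ε * (2*M + ρ * (2*ε) ^ (1 + ν)) with hK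
    have hK0 : (0:ℝ) ≤ K := by
      have : (0:ℝ) ≤ (2*ε) ^ (1 + ν) := Real.rpow_nonneg (by positivity) _
      rw [hK]; positivity
    have oneside : ∀ y ∈ Metric.ball x (ε/2), ∀ z ∈ Metric.ball x (ε/2),
        h z - h y ≤ K * ‖z - y‖ := by
      intro y hy z hz
      rcases eq_or_ne z y with rfl | hzy
      · simp
      set d := ‖z - y‖ with hd
      have hd0 : 0 < d := by rw [hd]; exact norm_sub_pos_iff.2 hzy
      set u : EuclideanSpace ℝ (Fin n) := z + ((ε/2)/d) • (z - y) with hu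
      have huball : u ∈ Metric.ball x ε := by
        rw [mem_ball_iff_norm]
        have he : u - x = (z - x) + ((ε/2)/d) • (z - y) := by rw [hu]; module
        have hns : ‖((ε/2)/d) • (z - y)‖ = ε/2 := by
          rw [norm_smul, Real.norm_eq_abs, abs_of_nonneg (by positivity), ← hd,
            div_mul_cancel₀ _ hd0.ne']
        calc ‖u - x‖ ≤ ‖z - x‖ + ‖((ε/2)/d) • (z - y)‖ := by
              rw [he]; exact norm_add_le _ _
          _ < ε/2 + ε/2 := by
              rw [hns]
              have := mem_ball_iff_norm.1 hz
              linarith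
          _ = ε := by ring
      set t : ℝ := d / (d + ε/2) with ht
      have htden : 0 < d + ε/2 := by linarith
      have ht0 : 0 ≤ t := by positivity
      have ht1 : t ≤ 1 := by rw [ht, div_le_one htden]; linarith
      have hzeq : t • u + (1 - t) • y = z := by
        have hc : t * ((ε/2)/d) = 1 - t := by
          rw [ht]; field_simp; ring
        calc t • u + (1 - t) • y
            = t • z + ((1-t) • z - (1-t) • y) + (1 - t) • y := by
              rw [hu, smul_add, smul_smul, hc, smul_sub]
          _ = t • z + (1-t) • z := by abel
          _ = z := by rw [← add_smul]; simp
      have hyS : y ∈ S := hsub (Metric.ball_subset_ball (by linarith) hy)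
      have huS : u ∈ S := hsub huball
      have hp := hpara u huS y hyS t ⟨ht0, ht1⟩
      rw [hzeq] at hp
      -- bounds
      have huy : ‖u - y‖ ≤ 2*ε := by
        calc ‖u - y‖ ≤ ‖u - x‖ + ‖x - y‖ := norm_sub_le_norm_sub_add_norm_sub u x y
          _ ≤ ε + ε/2 := by
              have h1 := mem_ball_iff_norm.1 huball
              have h2 := mem_ball_iff_norm.1 hy
              rw [norm_sub_rev x y]
              linarith
          _ ≤ 2*ε := by linarith
      have hry : ‖u - y‖ ^ (1 + ν) ≤ (2*ε) ^ (1 + ν) :=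
        Real.rpow_le_rpow (norm_nonneg _) huy hν'
      have h2M : h u - h y ≤ 2*M := by
        have h1 := (abs_le.1 (hbd u huball)).2
        have h2 := (abs_le.1 (hbd y (Metric.ball_subset_ball (by linarith) hy))).1
        linarith
      have hB : t * (h u - h y) ≤ t * (2*M) := mul_le_mul_of_nonneg_left h2M ht0
      have hmin : min t (1 - t) ≤ t := min_le_left _ _
      have hmin0 : 0 ≤ min t (1 - t) := le_min ht0 (by linarith)
      have hC : ρ * min t (1 - t) * ‖u - y‖ ^ (1 + ν) ≤ ρ * t * (2*ε) ^ (1 + ν) :=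
        mul_le_mul (mul_le_mul_of_nonneg_left hmin hρ) hry
          (Real.rpow_nonneg (norm_nonneg _) _) (mul_nonneg hρ ht0)
      have ht2 : t ≤ 2/ε * d := by
        rw [ht, div_le_iff₀ htden]
        have key0 : 2/ε * d * (d + ε/2) = 2*d^2/ε + d := by field_simp
        rw [key0]
        have : (0:ℝ) ≤ 2*d^2/ε := by positivity
        linarith
      have hD2 : t * (2*M + ρ*(2*ε) ^ (1 + ν)) ≤ (2/ε*d) * (2*M + ρ*(2*ε) ^ (1 + ν)) := by
        refine mul_le_mul_of_nonneg_right ht2 ?_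
        have : (0:ℝ) ≤ (2*ε) ^ (1 + ν) := Real.rpow_nonneg (by positivity) _
        positivity
      have e1 : t * (2*M + ρ*(2*ε) ^ (1 + ν)) = t*(2*M) + ρ*t*(2*ε) ^ (1 + ν) := by ring
      have e2 : (2/ε*d) * (2*M + ρ*(2*ε) ^ (1 + ν)) = K * d := by rw [hK]; ring
      have e3 : t * (h u - h y) = t * h u - t * h y := by ring
      have e4 : (1 - t) * h y = h y - t * h y := by ring
      linarith
    have hlip : LipschitzOnWith (Real.toNNReal K) h (Metric.ball x (ε/2)) := by
      refine LipschitzOnWith.of_dist_le' (fun p hp q hq => ?_)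
      rw [Real.dist_eq, dist_eq_norm_sub, abs_sub_le_iff]
      constructor
      · exact oneside q hq p hp
      · rw [norm_sub_rev]; exact oneside p hp q hq
    exact ⟨Real.toNNReal K, Metric.ball x (ε/2),
      nhdsWithin_le_nhds (Metric.ball_mem_nhds x (by positivity)), hlip⟩
end

section
/- Let ν ∈ (0,1], let S ⊆ ℝᵐ be a convex set, let φ : ℝⁿ → ℝ be convex and Lipschitz with constant L₀, and let g : ℝᵐ → ℝⁿ be differentiable with Jacobian J satisfying ‖J(x) − J(y)‖ ≤ L₁‖x−y‖^{ν} (operator norm) for all x, y ∈ S. Then the composite function h := φ∘g is ν-paraconvex on S with constant ρ = 2L₀L₁/(ν+1), i.e., h(λx+(1−λ)y) ≤ λh(x) + (1−λ)h(y) + (2L₀L₁/(ν+1))·min{λ,1−λ}·‖x−y‖^{1+ν} for all x, y ∈ S and λ ∈ [0,1]. -/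
set_option maxHeartbeats 1000000

open Set intervalIntegral MeasureTheory

/-- Taylor-type bound: if the Jacobian is `ν`-Hölder on a convex set `S`,
then `‖g b - g a - J a (b - a)‖ ≤ L₁/(ν+1) * ‖b - a‖^(1+ν)` for `a, b ∈ S`. -/
theorem taylor_aux {m N : ℕ} {ν : ℝ} (hν0 : 0 < ν)
    {S : Set (EuclideanSpace ℝ (Fin m))} (hScv : Convex ℝ S)
    {g : EuclideanSpace ℝ (Fin m) → EuclideanSpace ℝ (Fin N)}
    {J : EuclideanSpace ℝ (Fin m) →
      (EuclideanSpace ℝ (Fin m) →L[ℝ] EuclideanSpace ℝ (Fin N))}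
    (hg : ∀ x, HasFDerivAt g (J x) x) {L₁ : ℝ} (hL₁ : 0 ≤ L₁)
    (hJ : ∀ x ∈ S, ∀ y ∈ S, ‖J x - J y‖ ≤ L₁ * ‖x - y‖ ^ ν)
    {a b : EuclideanSpace ℝ (Fin m)} (ha : a ∈ S) (hb : b ∈ S) :
    ‖g b - g a - J a (b - a)‖ ≤ L₁ / (ν + 1) * ‖b - a‖ ^ (1 + ν) := by
  rcases eq_or_ne b a with rfl | hba
  · simp only [sub_self, map_zero]
    have : (0:ℝ) ≤ L₁ / (ν + 1) * ‖(0:EuclideanSpace ℝ (Fin m))‖ ^ (1 + ν) := by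
      apply mul_nonneg (div_nonneg hL₁ (by linarith)) (Real.rpow_nonneg (norm_nonneg _) _)
    simpa using this
  have hbapos : (0:ℝ) < ‖b - a‖ := by
    rw [norm_pos_iff, sub_ne_zero]; exact hba
  set γ : ℝ → EuclideanSpace ℝ (Fin m) := fun s => a + s • (b - a) with hγ
  have hγ0 : γ 0 = a := by simp [hγ]
  have hγ1 : γ 1 = b := by simp [hγ]
  have hγmem : ∀ s ∈ Set.Icc (0:ℝ) 1, γ s ∈ S := by
    intro s hs
    have h := hScv ha hb (by linarith [hs.2] : (0:ℝ) ≤ 1 - s) hs.1 (by ring)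
    convert h using 1
    simp only [hγ]
    module
  have hd : ∀ s ∈ Set.uIcc (0:ℝ) 1,
      HasDerivAt (fun s => g (γ s)) ((J (γ s)) (b - a)) s := by
    intro s _
    have h1 : HasDerivAt γ (b - a) s := by
      simpa [hγ] using ((hasDerivAt_id s).smul_const (b - a)).const_add a
    exact (hg (γ s)).comp_hasDerivAt s h1
  -- continuity of the derivative on [0,1]
  have hJcont : ContinuousOn (fun s => J (γ s)) (Set.Icc (0:ℝ) 1) := by
    intro s hs
    have hbound : ∀ s' ∈ Set.Icc (0:ℝ) 1,
        dist (J (γ s')) (J (γ s)) ≤ (L₁ * ‖b - a‖ ^ ν) * |s' - s| ^ ν := by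
      intro s' hs'
      rw [dist_eq_norm]
      calc ‖J (γ s') - J (γ s)‖ ≤ L₁ * ‖γ s' - γ s‖ ^ ν :=
            hJ _ (hγmem s' hs') _ (hγmem s hs)
        _ = (L₁ * ‖b - a‖ ^ ν) * |s' - s| ^ ν := by
            have : γ s' - γ s = (s' - s) • (b - a) := by simp only [hγ]; module
            rw [this, norm_smul, Real.norm_eq_abs,
              Real.mul_rpow (abs_nonneg _) (norm_nonneg _)]
            ring
    have htend : Filter.Tendsto (fun s' => (L₁ * ‖b - a‖ ^ ν) * |s' - s| ^ ν)
        (nhds s) (nhds 0) := by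
      have h1 : Filter.Tendsto (fun s' : ℝ => |s' - s|) (nhds s) (nhds 0) := by
        have : Continuous fun s' : ℝ => |s' - s| :=
          continuous_abs.comp (continuous_id.sub continuous_const)
        simpa using this.tendsto s
      have h2 : Filter.Tendsto (fun u : ℝ => u ^ ν) (nhds 0) (nhds 0) := by
        have := (Real.continuousAt_rpow_const 0 ν (Or.inr hν0.le)).tendsto
        simpa [Real.zero_rpow hν0.ne'] using this
      have := (h2.comp h1).const_mul (L₁ * ‖b - a‖ ^ ν)
      simpa using this
    have : Filter.Tendsto (fun s' => dist (J (γ s')) (J (γ s)))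
        (nhdsWithin s (Set.Icc (0:ℝ) 1)) (nhds 0) := by
      apply squeeze_zero' (Filter.eventually_of_mem self_mem_nhdsWithin
        (fun s' _ => dist_nonneg))
      · exact Filter.eventually_of_mem self_mem_nhdsWithin (fun s' hs' => hbound s' hs')
      · exact htend.mono_left nhdsWithin_le_nhds
    exact (tendsto_iff_dist_tendsto_zero).2 this
  have hint : IntervalIntegrable (fun s => (J (γ s)) (b - a)) volume 0 1 := by
    apply ContinuousOn.intervalIntegrable
    rw [Set.uIcc_of_le zero_le_one]
    exact hJcont.clm_apply continuousOn_const
  have hftc : ∫ s in (0:ℝ)..1, (J (γ s)) (b - a) = g b - g a := by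
    rw [integral_eq_sub_of_hasDerivAt hd hint, hγ0, hγ1]
  have key : g b - g a - J a (b - a)
      = ∫ s in (0:ℝ)..1, ((J (γ s)) (b - a) - (J a) (b - a)) := by
    rw [intervalIntegral.integral_sub hint intervalIntegrable_const,
      hftc, intervalIntegral.integral_const]
    simp
  rw [key]
  have hboundint : IntervalIntegrable
      (fun s : ℝ => L₁ * s ^ ν * ‖b - a‖ ^ (1 + ν)) volume 0 1 := by
    apply ContinuousOn.intervalIntegrable
    apply ContinuousOn.mul _ continuousOn_const
    apply ContinuousOn.mul continuousOn_const
    intro s _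
    exact (Real.continuousAt_rpow_const s ν (Or.inr hν0.le)).continuousWithinAt
  have hnorm : ‖∫ s in (0:ℝ)..1, ((J (γ s)) (b - a) - (J a) (b - a))‖
      ≤ |∫ s in (0:ℝ)..1, L₁ * s ^ ν * ‖b - a‖ ^ (1 + ν)| := by
    apply intervalIntegral.norm_integral_le_abs_of_norm_le _ hboundint
    rw [Set.uIoc_of_le zero_le_one]
    filter_upwards [ae_restrict_mem measurableSet_Ioc] with s hs
    have hs01 : s ∈ Set.Icc (0:ℝ) 1 := ⟨hs.1.le, hs.2⟩
    have h1 : ‖(J (γ s)) (b - a) - (J a) (b - a)‖ ≤ ‖J (γ s) - J a‖ * ‖b - a‖ := by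
      have := (J (γ s) - J a).le_opNorm (b - a)
      simpa using this
    have h2 : ‖J (γ s) - J a‖ ≤ L₁ * (s * ‖b - a‖) ^ ν := by
      have := hJ _ (hγmem s hs01) _ ha
      have hnorm : ‖γ s - a‖ = s * ‖b - a‖ := by
        have hd : γ s - a = s • (b - a) := by simp only [hγ]; module
        rw [hd, norm_smul, Real.norm_eq_abs, abs_of_nonneg hs.1.le]
      rwa [hnorm] at this
    calc ‖(J (γ s)) (b - a) - (J a) (b - a)‖ ≤ L₁ * (s * ‖b - a‖) ^ ν * ‖b - a‖ := by
          calc _ ≤ ‖J (γ s) - J a‖ * ‖b - a‖ := h1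
            _ ≤ L₁ * (s * ‖b - a‖) ^ ν * ‖b - a‖ :=
              mul_le_mul_of_nonneg_right h2 (norm_nonneg _)
      _ = L₁ * s ^ ν * ‖b - a‖ ^ (1 + ν) := by
          rw [Real.mul_rpow hs.1.le (norm_nonneg _), Real.rpow_add hbapos, Real.rpow_one]
          ring
  have hval : ∫ s in (0:ℝ)..1, L₁ * s ^ ν * ‖b - a‖ ^ (1 + ν)
      = L₁ / (ν + 1) * ‖b - a‖ ^ (1 + ν) := by
    have : ∀ s : ℝ, L₁ * s ^ ν * ‖b - a‖ ^ (1 + ν)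
        = (L₁ * ‖b - a‖ ^ (1 + ν)) * s ^ ν := fun s => by ring
    simp only [this]
    rw [intervalIntegral.integral_const_mul, integral_rpow (Or.inl (by linarith))]
    rw [Real.one_rpow, Real.zero_rpow (by linarith : ν + 1 ≠ 0)]
    ring
  calc ‖∫ s in (0:ℝ)..1, ((J (γ s)) (b - a) - (J a) (b - a))‖
      ≤ |∫ s in (0:ℝ)..1, L₁ * s ^ ν * ‖b - a‖ ^ (1 + ν)| := hnorm
    _ = |L₁ / (ν + 1) * ‖b - a‖ ^ (1 + ν)| := by rw [hval]
    _ = L₁ / (ν + 1) * ‖b - a‖ ^ (1 + ν) := by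
        apply abs_of_nonneg
        exact mul_nonneg (div_nonneg hL₁ (by linarith)) (Real.rpow_nonneg (norm_nonneg _) _)

/-- If `φ` is convex and Lipschitz with constant `L₀` and `g` has a
`ν`-Hölder continuous Jacobian with constant `L₁` on a convex set `S`, then `h = φ ∘ g`
is `ν`-paraconvex on `S` with constant `2L₀L₁/(ν+1)`. -/
theorem composite_paraconvex {m N : ℕ} (ν : ℝ) (hν : ν ∈ Set.Ioc (0 : ℝ) 1)
    (S : Set (EuclideanSpace ℝ (Fin m))) (hScv : Convex ℝ S)
    (φ : EuclideanSpace ℝ (Fin N) → ℝ) (L₀ : NNReal)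
    (hφconv : ConvexOn ℝ Set.univ φ) (hφlip : LipschitzWith L₀ φ)
    (g : EuclideanSpace ℝ (Fin m) → EuclideanSpace ℝ (Fin N))
    (J : EuclideanSpace ℝ (Fin m) →
      (EuclideanSpace ℝ (Fin m) →L[ℝ] EuclideanSpace ℝ (Fin N)))
    (hg : ∀ x, HasFDerivAt g (J x) x) (L₁ : ℝ) (hL₁ : 0 ≤ L₁)
    (hJ : ∀ x ∈ S, ∀ y ∈ S, ‖J x - J y‖ ≤ L₁ * ‖x - y‖ ^ ν) :
    ∀ x ∈ S, ∀ y ∈ S, ∀ t ∈ Set.Icc (0 : ℝ) 1,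
      φ (g (t • x + (1 - t) • y)) ≤
        t * φ (g x) + (1 - t) * φ (g y) +
          (2 * (L₀ : ℝ) * L₁ / (ν + 1)) * min t (1 - t) * ‖x - y‖ ^ (1 + ν) := by
  obtain ⟨hν0, hν1⟩ := hν
  intro x hx y hy t ht
  obtain ⟨ht0, ht1⟩ := ht
  have ht1' : (0:ℝ) ≤ 1 - t := by linarith
  set z := t • x + (1 - t) • y with hz
  have hzS : z ∈ S := hScv hx hy ht0 ht1' (by ring)
  set Ex := g x - g z - J z (x - z) with hEx
  set Ey := g y - g z - J z (y - z) with hEy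
  have hExle : ‖Ex‖ ≤ L₁ / (ν + 1) * ‖x - z‖ ^ (1 + ν) :=
    taylor_aux hν0 hScv hg hL₁ hJ hzS hx
  have hEyle : ‖Ey‖ ≤ L₁ / (ν + 1) * ‖y - z‖ ^ (1 + ν) :=
    taylor_aux hν0 hScv hg hL₁ hJ hzS hy
  have hxz : x - z = (1 - t) • (x - y) := by rw [hz]; module
  have hyz : y - z = t • (y - x) := by rw [hz]; module
  have hxznorm : ‖x - z‖ = (1 - t) * ‖x - y‖ := by
    rw [hxz, norm_smul, Real.norm_eq_abs, abs_of_nonneg ht1']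
  have hyznorm : ‖y - z‖ = t * ‖x - y‖ := by
    rw [hyz, norm_smul, Real.norm_eq_abs, abs_of_nonneg ht0, norm_sub_rev]
  -- combination identity
  have hsum0 : t • (x - z) + (1 - t) • (y - z) = 0 := by rw [hz]; module
  have hJ0 : t • (J z (x - z)) + (1 - t) • (J z (y - z)) = 0 := by
    rw [← _root_.map_smul, ← _root_.map_smul, ← map_add, hsum0, map_zero]
  have hcomb : g z - (t • g x + (1 - t) • g y) = -(t • Ex + (1 - t) • Ey) := by
    have expand : t • Ex + (1 - t) • Ey
        = t • g x + (1 - t) • g y - g z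
          - (t • (J z (x - z)) + (1 - t) • (J z (y - z))) := by
      rw [hEx, hEy]; module
    rw [expand, hJ0]; module
  -- Lipschitz step
  have hφ1 : φ (g z) ≤ φ (t • g x + (1 - t) • g y)
      + (L₀ : ℝ) * ‖g z - (t • g x + (1 - t) • g y)‖ := by
    have h := hφlip.dist_le_mul (g z) (t • g x + (1 - t) • g y)
    rw [Real.dist_eq, dist_eq_norm] at h
    linarith [(abs_le.1 h).2]
  -- convexity step
  have hφ2 : φ (t • g x + (1 - t) • g y) ≤ t * φ (g x) + (1 - t) * φ (g y) :=
    hφconv.2 (Set.mem_univ (g x)) (Set.mem_univ (g y)) ht0 ht1' (by ring)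
  -- norm of error combination
  have hrpow_le : ∀ u : ℝ, 0 ≤ u → u ≤ 1 → u ^ (1 + ν) ≤ u := by
    intro u h0 h1
    rcases eq_or_lt_of_le h0 with rfl | h
    · rw [Real.zero_rpow (by linarith : (1:ℝ) + ν ≠ 0)]
    · calc u ^ (1 + ν) ≤ u ^ (1:ℝ) :=
            Real.rpow_le_rpow_of_exponent_ge h h1 (by linarith)
        _ = u := Real.rpow_one u
  have hxy1ν : (0:ℝ) ≤ ‖x - y‖ ^ (1 + ν) := Real.rpow_nonneg (norm_nonneg _) _
  have hEcomb : ‖g z - (t • g x + (1 - t) • g y)‖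
      ≤ L₁ / (ν + 1) * ‖x - y‖ ^ (1 + ν) * (2 * min t (1 - t)) := by
    rw [hcomb, norm_neg]
    have hc0 : (0:ℝ) ≤ L₁ / (ν + 1) := div_nonneg hL₁ (by linarith)
    calc ‖t • Ex + (1 - t) • Ey‖ ≤ t * ‖Ex‖ + (1 - t) * ‖Ey‖ := by
          calc ‖t • Ex + (1 - t) • Ey‖ ≤ ‖t • Ex‖ + ‖(1 - t) • Ey‖ := norm_add_le _ _
            _ = t * ‖Ex‖ + (1 - t) * ‖Ey‖ := by
                rw [norm_smul, norm_smul, Real.norm_eq_abs, Real.norm_eq_abs,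
                  abs_of_nonneg ht0, abs_of_nonneg ht1']
      _ ≤ t * (L₁ / (ν + 1) * ‖x - z‖ ^ (1 + ν))
            + (1 - t) * (L₁ / (ν + 1) * ‖y - z‖ ^ (1 + ν)) := by
          exact add_le_add (mul_le_mul_of_nonneg_left hExle ht0) (mul_le_mul_of_nonneg_left hEyle ht1')
      _ = L₁ / (ν + 1) * ‖x - y‖ ^ (1 + ν)
            * (t * (1 - t) ^ (1 + ν) + (1 - t) * t ^ (1 + ν)) := by
          rw [hxznorm, hyznorm, Real.mul_rpow ht1' (norm_nonneg _),
            Real.mul_rpow ht0 (norm_nonneg _)]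
          ring
      _ ≤ L₁ / (ν + 1) * ‖x - y‖ ^ (1 + ν) * (2 * min t (1 - t)) := by
          apply mul_le_mul_of_nonneg_left _ (mul_nonneg hc0 hxy1ν)
          have h1 : (1 - t) ^ (1 + ν) ≤ 1 - t := hrpow_le _ ht1' (by linarith)
          have h2 : t ^ (1 + ν) ≤ t := hrpow_le _ ht0 ht1
          have h3 : t * (1 - t) ^ (1 + ν) + (1 - t) * t ^ (1 + ν) ≤ 2 * (t * (1 - t)) := by
            nlinarith
          refine h3.trans ?_
          rcases le_total t (1 - t) with h | h
          · rw [min_eq_left h]; nlinarith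
          · rw [min_eq_right h]; nlinarith
  have hfinal : (L₀ : ℝ) * ‖g z - (t • g x + (1 - t) • g y)‖
      ≤ (2 * (L₀ : ℝ) * L₁ / (ν + 1)) * min t (1 - t) * ‖x - y‖ ^ (1 + ν) := by
    calc (L₀ : ℝ) * ‖g z - (t • g x + (1 - t) • g y)‖
        ≤ (L₀ : ℝ) * (L₁ / (ν + 1) * ‖x - y‖ ^ (1 + ν) * (2 * min t (1 - t))) :=
          mul_le_mul_of_nonneg_left hEcomb L₀.coe_nonneg
      _ = (2 * (L₀ : ℝ) * L₁ / (ν + 1)) * min t (1 - t) * ‖x - y‖ ^ (1 + ν) := by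
          ring
  linarith
end

section
/- Let ν ∈ (0,1], let S ⊆ ℝⁿ be a nonempty convex set, and let h : ℝⁿ → ℝ be continuous on S. If there exists ρ ≥ 0 such that h((x+y)/2) ≤ (1/2)h(x) + (1/2)h(y) + (ρ/2)‖x−y‖^{1+ν} for all x, y ∈ S (midpoint ν-paraconvexity), then h(λx+(1−λ)y) ≤ λh(x) + (1−λ)h(y) + ρ‖x−y‖^{1+ν} for all x, y ∈ S and λ ∈ [0,1]; in particular, h is ν-paraconvex on S. -/
/-!
Restrict `h` to the segment from `y` to `x` and subtract the chord: the resulting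
`ψ : [0, 1] → ℝ` vanishes at both ends, is continuous, and satisfies the midpoint
inequality with defect `C := ρ ‖x - y‖ ^ (1 + ν)`. At a maximiser `t₀` of `ψ`, write `t₀`
as the midpoint of an endpoint `e` and some `s ∈ [0, 1]`; then
`max ψ ≤ (0 + max ψ) / 2 + C / 2`, i.e. `max ψ ≤ C`.
-/

open Set

theorem le_of_midpoint_le_of_endpoints_nonpos {ψ : ℝ → ℝ} {C p : ℝ} (hC : 0 ≤ C) (hp : 0 ≤ p)
    (hcont : ContinuousOn ψ (Icc 0 1)) (hψ0 : ψ 0 ≤ 0) (hψ1 : ψ 1 ≤ 0)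
    (hmid : ∀ a ∈ Icc (0 : ℝ) 1, ∀ b ∈ Icc (0 : ℝ) 1,
      ψ ((a + b) / 2) ≤ (ψ a + ψ b) / 2 + C / 2 * |a - b| ^ p) :
    ∀ t ∈ Icc (0 : ℝ) 1, ψ t ≤ C := by
  obtain ⟨t₀, ht₀, hmax⟩ :=
    isCompact_Icc.exists_isMaxOn (nonempty_Icc.2 zero_le_one) hcont
  suffices ψ t₀ ≤ C from fun t ht => (hmax ht).trans this
  obtain ⟨e, s, he, hs, hψe, hes, hdist⟩ : ∃ e s : ℝ, e ∈ Icc (0 : ℝ) 1 ∧ s ∈ Icc (0 : ℝ) 1 ∧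
      ψ e ≤ 0 ∧ (e + s) / 2 = t₀ ∧ |e - s| ≤ 1 := by
    rcases le_total t₀ (1 / 2) with hlow | hhigh
    · exact ⟨0, 2 * t₀, ⟨le_rfl, zero_le_one⟩, ⟨by linarith [ht₀.1], by linarith⟩, hψ0,
        by ring, abs_le.2 ⟨by linarith, by linarith [ht₀.1]⟩⟩
    · exact ⟨1, 2 * t₀ - 1, ⟨zero_le_one, le_rfl⟩, ⟨by linarith, by linarith [ht₀.2]⟩, hψ1,
        by ring, abs_le.2 ⟨by linarith [ht₀.2], by linarith⟩⟩
  have hdefect : C / 2 * |e - s| ^ p ≤ C / 2 :=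
    mul_le_of_le_one_right (by positivity) (Real.rpow_le_one (abs_nonneg _) hdist hp)
  have hs_le : ψ s ≤ ψ t₀ := hmax hs
  have hmid_t₀ := hmid e he s hs
  rw [hes] at hmid_t₀
  linarith

theorem paraconvex_of_midpoint_general {n : ℕ} (ν ρ : ℝ)
    (hν : ν ∈ Set.Ioc (0 : ℝ) 1) (hρ : 0 ≤ ρ)
    (S : Set (EuclideanSpace ℝ (Fin n))) (hScv : Convex ℝ S)
    (h : EuclideanSpace ℝ (Fin n) → ℝ) (hcont : ContinuousOn h S)
    (hmid : ∀ x ∈ S, ∀ y ∈ S,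
        h ((1 / 2 : ℝ) • (x + y)) ≤
          (1 / 2) * h x + (1 / 2) * h y + (ρ / 2) * ‖x - y‖ ^ (1 + ν)) :
    ∀ x ∈ S, ∀ y ∈ S, ∀ t ∈ Set.Icc (0 : ℝ) 1,
      h (t • x + (1 - t) • y) ≤
        t * h x + (1 - t) * h y + ρ * ‖x - y‖ ^ (1 + ν) := by
  intro x hx y hy
  set γ : ℝ → EuclideanSpace ℝ (Fin n) := fun t => t • x + (1 - t) • y with hγ
  have hγS : MapsTo γ (Icc 0 1) S := fun t ht => hScv hx hy ht.1 (by linarith [ht.2]) (by ring)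
  have hγ_mid (a b : ℝ) : (1 / 2 : ℝ) • (γ a + γ b) = γ ((a + b) / 2) := by
    simp only [hγ]; module
  have hγ_dist (a b : ℝ) : ‖γ a - γ b‖ = |a - b| * ‖x - y‖ := by
    rw [← Real.norm_eq_abs, ← norm_smul]; congr 1; simp only [hγ]; module
  have hψ := le_of_midpoint_le_of_endpoints_nonpos
    (ψ := fun t => h (γ t) - (t * h x + (1 - t) * h y)) (C := ρ * ‖x - y‖ ^ (1 + ν))
    (p := 1 + ν)
    (by positivity) (by linarith [hν.1])
    ((hcont.comp (by fun_prop) hγS).sub (by fun_prop)) (by simp [hγ]) (by simp [hγ])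
    (fun a ha b hb => by
      have hab := hmid _ (hγS ha) _ (hγS hb)
      rw [hγ_mid, hγ_dist, Real.mul_rpow (abs_nonneg _) (norm_nonneg _)] at hab
      linarith)
  intro t ht
  linarith [hψ t ht]

/-- A continuous midpoint `ν`-paraconvex function on a nonempty convex
set `S` satisfies the full `ν`-paraconvexity inequality (without the `min` factor) with
the same constant `ρ`; in particular it is `ν`-paraconvex on `S`. -/
theorem paraconvex_of_midpoint {n : ℕ} (ν ρ : ℝ)
    (hν : ν ∈ Set.Ioc (0 : ℝ) 1) (hρ : 0 ≤ ρ)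
    (S : Set (EuclideanSpace ℝ (Fin n))) (hSne : S.Nonempty) (hScv : Convex ℝ S)
    (h : EuclideanSpace ℝ (Fin n) → ℝ) (hcont : ContinuousOn h S)
    (hmid : ∀ x ∈ S, ∀ y ∈ S,
        h ((1 / 2 : ℝ) • (x + y)) ≤
          (1 / 2) * h x + (1 / 2) * h y + (ρ / 2) * ‖x - y‖ ^ (1 + ν)) :
    ∀ x ∈ S, ∀ y ∈ S, ∀ t ∈ Set.Icc (0 : ℝ) 1,
      h (t • x + (1 - t) • y) ≤
        t * h x + (1 - t) * h y + ρ * ‖x - y‖ ^ (1 + ν) :=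
  paraconvex_of_midpoint_general ν ρ hν hρ S hScv h hcont hmid
end

section
/- In the Setting, let x ∈ X satisfy the first-order stationarity inequality f(y) ≥ f(x) − ρ‖y−x‖^{1+ν} for all y ∈ X (i.e., 0 is a ρ-paraconvex subgradient of f at x, which holds at every stationary point of min_{X} f when f is ν-paraconvex with constant ρ). Then either x ∈ X*, or dist(x, X*) ≥ (μ/ρ)^{δ/(δ(1+ν)−1)}. -/
/-- Under the Hölderian error bound, if `x ∈ X` satisfies the
first-order stationarity inequality `f y ≥ f x - ρ‖y-x‖^(1+ν)` on `X`, then either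
`x ∈ X*` or `dist(x, X*) ≥ (μ/ρ)^(δ/(δ(1+ν)-1))`. -/
theorem stationary_dist_lower_bound {n : ℕ}
    (X : Set (EuclideanSpace ℝ (Fin n))) (hXne : X.Nonempty)
    (hXcl : IsClosed X) (hXcv : Convex ℝ X)
    (f : EuclideanSpace ℝ (Fin n) → ℝ) (hf : Continuous f)
    (fstar : ℝ) (Xstar : Set (EuclideanSpace ℝ (Fin n)))
    (hXstar : Xstar = {x ∈ X | f x = fstar}) (hXstarne : Xstar.Nonempty)
    (hfstar : ∀ x ∈ X, fstar ≤ f x)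
    (ρ ν δ μ : ℝ) (hρ : 0 < ρ) (hν : ν ∈ Set.Ioc (0 : ℝ) 1)
    (hδ : δ ∈ Set.Ioc (1 / (1 + ν)) 1) (hμ : 0 < μ)
    (hHEB : ∀ x ∈ X, μ * Metric.infDist x Xstar ^ (1 / δ) ≤ f x - fstar)
    (x : EuclideanSpace ℝ (Fin n)) (hx : x ∈ X)
    (hstat : ∀ y ∈ X, f x - ρ * ‖y - x‖ ^ (1 + ν) ≤ f y) :
    x ∈ Xstar ∨ (μ / ρ) ^ (δ / (δ * (1 + ν) - 1)) ≤ Metric.infDist x Xstar := by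
  obtain ⟨hν0, hν1⟩ := hν
  obtain ⟨hδl, hδ1⟩ := hδ
  have h1ν : (0:ℝ) < 1 + ν := by linarith
  have hδ0 : 0 < δ := lt_trans (by positivity) hδl
  have hD : 0 < δ * (1 + ν) - 1 := by
    have := (div_lt_iff₀ h1ν).mp hδl
    linarith [this]
  by_cases hmem : x ∈ Xstar
  · exact Or.inl hmem
  right
  have hXstarcl : IsClosed Xstar := by
    rw [hXstar]
    exact hXcl.inter (isClosed_eq hf continuous_const)
  set d := Metric.infDist x Xstar with hdd
  have hd0 : 0 < d := (hXstarcl.notMem_iff_infDist_pos hXstarne).mp hmem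
  obtain ⟨y, hyX, hyd⟩ := hXstarcl.exists_infDist_eq_dist hXstarne x
  have hyX' : y ∈ X := by rw [hXstar] at hyX; exact hyX.1
  have hfy : f y = fstar := by rw [hXstar] at hyX; exact hyX.2
  have hnorm : ‖y - x‖ = d := by
    rw [hdd, hyd, dist_eq_norm, norm_sub_rev]
  have h1 : f x - fstar ≤ ρ * d ^ (1 + ν) := by
    have := hstat y hyX'
    rw [hfy, hnorm] at this
    linarith
  have h2 : μ * d ^ (1 / δ) ≤ ρ * d ^ (1 + ν) :=
    le_trans (hHEB x hx) h1
  set e : ℝ := 1 + ν - 1 / δ with he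
  have he0 : 0 < e := by
    rw [he]
    have : 1 / δ < 1 + ν := (div_lt_iff₀ hδ0).mpr (by nlinarith)
    linarith
  have h3 : μ / ρ ≤ d ^ e := by
    rw [div_le_iff₀ hρ]
    have hpow : d ^ e * d ^ (1 / δ) = d ^ (1 + ν) := by
      rw [← Real.rpow_add hd0, he]; ring_nf
    have hpos : (0:ℝ) < d ^ (1 / δ) := Real.rpow_pos_of_pos hd0 _
    calc μ = μ * d ^ (1 / δ) / d ^ (1 / δ) := by field_simp
      _ ≤ ρ * d ^ (1 + ν) / d ^ (1 / δ) := by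
          gcongr
      _ = d ^ e * ρ := by
          rw [← hpow]; field_simp
  have hexp : δ / (δ * (1 + ν) - 1) = 1 / e := by
    rw [div_eq_div_iff hD.ne' he0.ne', he]; field_simp
  rw [hexp]
  calc (μ / ρ) ^ (1 / e) ≤ (d ^ e) ^ (1 / e) :=
        Real.rpow_le_rpow (by positivity) h3 (by positivity)
    _ = d := by
        rw [← Real.rpow_mul hd0.le, mul_one_div_cancel he0.ne', Real.rpow_one]
end

section
/- In the Setting, suppose x_k ∈ T_{1/2}, let ζ_k be a ρ-paraconvex subgradient of f at x_k with 0 < ‖ζ_k‖ ≤ L, let α_k > 0, and let x_{k+1} = proj_X(x_k − α_k ζ_k/‖ζ_k‖). Then dist²(x_{k+1}, X*) ≤ dist²(x_k, X*) − (α_k/L)(f(x_k) − f*) + α_k², and dist²(x_{k+1}, X*) ≤ dist²(x_k, X*) − α_k·τ·dist(x_k, X*)^{1/δ} + α_k², where τ := μ/L. -/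
open scoped RealInnerProductSpace

set_option maxHeartbeats 1000000 in
/-- **Basic inequalities I, recurrences.** One step of the projected
subgradient method from `x_k ∈ T_{1/2}` satisfies
`dist²(x_{k+1},X*) ≤ dist²(x_k,X*) − (α_k/L)(f x_k − f*) + α_k²` and
`dist²(x_{k+1},X*) ≤ dist²(x_k,X*) − α_k τ dist(x_k,X*)^{1/δ} + α_k²`. -/
theorem basic_inequalities_I {n : ℕ}
    (X : Set (EuclideanSpace ℝ (Fin n))) (hXne : X.Nonempty)
    (hXcl : IsClosed X) (hXcv : Convex ℝ X)
    (f : EuclideanSpace ℝ (Fin n) → ℝ) (hf : Continuous f)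
    (fstar : ℝ) (Xstar : Set (EuclideanSpace ℝ (Fin n)))
    (hXstar : Xstar = {x ∈ X | f x = fstar}) (hXstarne : Xstar.Nonempty)
    (hfstar : ∀ x ∈ X, fstar ≤ f x)
    (ρ ν δ μ : ℝ) (hρ : 0 < ρ) (hν : ν ∈ Set.Ioc (0 : ℝ) 1)
    (hδ : δ ∈ Set.Ioc (1 / (1 + ν)) 1) (hμ : 0 < μ)
    (hHEB : ∀ x ∈ X, μ * Metric.infDist x Xstar ^ (1 / δ) ≤ f x - fstar)
    (L : ℝ) (hL : 0 < L) (τ : ℝ) (hτ : τ = μ / L)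
    (xk : EuclideanSpace ℝ (Fin n))
    (hxk : xk ∈ X ∧ Metric.infDist xk Xstar <
        ((1 / 2) * μ / ρ) ^ (δ / (δ * (1 + ν) - 1)))
    (ζ : EuclideanSpace ℝ (Fin n))
    (hζsub : ∀ y ∈ X, f xk + ⟪ζ, y - xk⟫ - ρ * ‖y - xk‖ ^ (1 + ν) ≤ f y)
    (hζ0 : 0 < ‖ζ‖) (hζL : ‖ζ‖ ≤ L)
    (α : ℝ) (hα : 0 < α)
    (xk1 : EuclideanSpace ℝ (Fin n))
    (hproj : xk1 ∈ X ∧ ∀ y ∈ X,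
        dist xk1 (xk - (α / ‖ζ‖) • ζ) ≤ dist y (xk - (α / ‖ζ‖) • ζ)) :
    Metric.infDist xk1 Xstar ^ 2 ≤
        Metric.infDist xk Xstar ^ 2 - (α / L) * (f xk - fstar) + α ^ 2 ∧
    Metric.infDist xk1 Xstar ^ 2 ≤
        Metric.infDist xk Xstar ^ 2 - α * τ * Metric.infDist xk Xstar ^ (1 / δ)
          + α ^ 2 := by
  obtain ⟨hxkX, hxkT⟩ := hxk
  obtain ⟨hxk1X, hproj2⟩ := hproj
  set u : EuclideanSpace ℝ (Fin n) := xk - (α / ‖ζ‖) • ζ with hu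
  set d : ℝ := Metric.infDist xk Xstar with hd
  have hν0 : 0 < ν := hν.1
  have hδ0 : 0 < δ := lt_trans (div_pos one_pos (by linarith)) hδ.1
  have hP : 0 < δ * (1 + ν) - 1 := by
    have h1 : 1 / (1 + ν) < δ := hδ.1
    have h2 : (0:ℝ) < 1 + ν := by linarith
    rw [div_lt_iff₀ h2] at h1
    linarith [h1]
  -- Xstar is closed
  have hXstar_cl : IsClosed Xstar := by
    rw [hXstar]
    exact hXcl.inter (isClosed_eq hf continuous_const)
  -- nearest point in Xstar to xk
  obtain ⟨z, hzX, hdz⟩ := hXstar_cl.exists_infDist_eq_dist hXstarne xk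
  have hzX' : z ∈ X := (hXstar ▸ hzX).1
  have hfz : f z = fstar := (hXstar ▸ hzX).2
  have hd0 : 0 ≤ d := Metric.infDist_nonneg
  have hdz' : ‖xk - z‖ = d := by rw [hd, hdz, dist_eq_norm]
  -- variational inequality for the projection
  haveI : Nonempty X := ⟨⟨xk, hxkX⟩⟩
  have hiInf : ‖u - xk1‖ = ⨅ w : X, ‖u - w‖ := by
    apply le_antisymm
    · apply le_ciInf
      intro w
      have := hproj2 w w.2
      rwa [dist_comm xk1 u, dist_comm (w:EuclideanSpace ℝ (Fin n)) u,
        dist_eq_norm, dist_eq_norm] at this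
    · have hbdd : BddBelow (Set.range fun w : X => ‖u - (w : EuclideanSpace ℝ (Fin n))‖) :=
        ⟨0, by rintro r ⟨w, rfl⟩; exact norm_nonneg _⟩
      have h := ciInf_le (f := fun w : X => ‖u - (w : EuclideanSpace ℝ (Fin n))‖) hbdd
        ⟨xk1, hxk1X⟩
      exact h
  have hVI : ∀ w ∈ X, ⟪u - xk1, w - xk1⟫ ≤ 0 :=
    (norm_eq_iInf_iff_real_inner_le_zero hXcv hxk1X).mp hiInf
  -- dist xk1 z ≤ dist u z (squared)
  have hstep1 : ‖xk1 - z‖ ^ 2 ≤ ‖u - z‖ ^ 2 := by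
    have hv := hVI z hzX'
    have hexp : u - z = (u - xk1) + (xk1 - z) := by abel
    have : ‖u - z‖ ^ 2 = ‖u - xk1‖ ^ 2 + 2 * ⟪u - xk1, xk1 - z⟫ + ‖xk1 - z‖ ^ 2 := by
      rw [hexp]; exact norm_add_sq_real _ _
    have hinner : 0 ≤ ⟪u - xk1, xk1 - z⟫ := by
      have : ⟪u - xk1, z - xk1⟫ = - ⟪u - xk1, xk1 - z⟫ := by
        rw [← inner_neg_right]; congr 1; abel
      linarith [hv, this ▸ hv]
    nlinarith [sq_nonneg ‖u - xk1‖]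
  -- subgradient inequality at z
  have hsub := hζsub z hzX'
  have hnz : ‖z - xk‖ = d := by rw [← hdz', norm_sub_rev]
  have hinnlb : (f xk - fstar) - ρ * d ^ ((1:ℝ) + ν) ≤ ⟪ζ, xk - z⟫ := by
    have h1 : ⟪ζ, z - xk⟫ = - ⟪ζ, xk - z⟫ := by
      rw [← inner_neg_right]; congr 1; abel
    rw [hnz, hfz] at hsub
    rw [h1] at hsub
    linarith
  -- key: ρ d^(1+ν) ≤ (1/2)(f xk - fstar)
  have hHEBxk : μ * d ^ ((1:ℝ) / δ) ≤ f xk - fstar := hHEB xk hxkX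
  have hkey : ρ * d ^ ((1:ℝ) + ν) ≤ (1 / 2) * (f xk - fstar) := by
    rcases eq_or_lt_of_le hd0 with hd0' | hd0'
    · rw [← hd0', Real.zero_rpow (by positivity : (1:ℝ) + ν ≠ 0)]
      have := hfstar xk hxkX
      nlinarith
    · have he : (0:ℝ) < (δ * (1 + ν) - 1) / δ := by positivity
      have hsplit : d ^ ((1:ℝ) + ν) = d ^ ((δ * (1 + ν) - 1) / δ) * d ^ ((1:ℝ) / δ) := by
        rw [← Real.rpow_add hd0']
        congr 1
        field_simp
        ring
      have hdB : d ^ ((δ * (1 + ν) - 1) / δ) ≤ (1 / 2) * μ / ρ := by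
        have h1 : d ^ ((δ * (1 + ν) - 1) / δ) ≤
            (((1 / 2) * μ / ρ) ^ (δ / (δ * (1 + ν) - 1))) ^ ((δ * (1 + ν) - 1) / δ) :=
          Real.rpow_le_rpow hd0 hxkT.le he.le
        have hone : (δ / (δ * (1 + ν) - 1)) * ((δ * (1 + ν) - 1) / δ) = 1 := by
          field_simp
        rwa [← Real.rpow_mul (by positivity), hone, Real.rpow_one] at h1
      calc ρ * d ^ ((1:ℝ) + ν) = (ρ * d ^ ((δ * (1 + ν) - 1) / δ)) * d ^ ((1:ℝ) / δ) := by
            rw [hsplit]; ring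
        _ ≤ ((1/2) * μ) * d ^ ((1:ℝ) / δ) := by
            apply mul_le_mul_of_nonneg_right _ (Real.rpow_nonneg hd0 _)
            calc ρ * d ^ ((δ * (1 + ν) - 1) / δ) ≤ ρ * ((1/2) * μ / ρ) :=
                  mul_le_mul_of_nonneg_left hdB hρ.le
              _ = (1/2) * μ := by field_simp
        _ ≤ (1/2) * (f xk - fstar) := by nlinarith
  have hflb : 0 ≤ f xk - fstar := sub_nonneg.mpr (hfstar xk hxkX)
  have hinnlb2 : (1/2) * (f xk - fstar) ≤ ⟪ζ, xk - z⟫ := by linarith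
  -- expand ‖u - z‖²
  have hexpand : ‖u - z‖ ^ 2 = ‖xk - z‖ ^ 2 - 2 * (α / ‖ζ‖) * ⟪ζ, xk - z⟫ + α ^ 2 := by
    have h1 : u - z = (xk - z) - (α / ‖ζ‖) • ζ := by rw [hu]; abel
    rw [h1, norm_sub_sq_real, real_inner_smul_right, norm_smul, real_inner_comm]
    have : ‖α / ‖ζ‖‖ = α / ‖ζ‖ := by
      rw [Real.norm_eq_abs, abs_of_pos (by positivity)]
    rw [this, mul_pow, div_pow, div_mul_cancel₀]
    · ring
    · positivity
  -- combine
  have hmono : α * ((1/2) * (f xk - fstar)) / L ≤ (α / ‖ζ‖) * ⟪ζ, xk - z⟫ := by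
    have h1 : α * ((1/2) * (f xk - fstar)) ≤ α * ⟪ζ, xk - z⟫ :=
      mul_le_mul_of_nonneg_left hinnlb2 hα.le
    have h2 : α * ((1/2) * (f xk - fstar)) / L ≤ α * ⟪ζ, xk - z⟫ / ‖ζ‖ := by
      apply div_le_div₀ (by nlinarith [hinnlb2, hflb]) h1 hζ0 hζL
    have h3 : (α / ‖ζ‖) * ⟪ζ, xk - z⟫ = α * ⟪ζ, xk - z⟫ / ‖ζ‖ := by ring
    rw [h3]
    exact h2
  have hd1 : Metric.infDist xk1 Xstar ^ 2 ≤ ‖xk1 - z‖ ^ 2 := by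
    have := Metric.infDist_le_dist_of_mem (x := xk1) hzX
    rw [dist_eq_norm] at this
    exact pow_le_pow_left₀ Metric.infDist_nonneg this 2
  have hmain : Metric.infDist xk1 Xstar ^ 2 ≤ d ^ 2 - (α / L) * (f xk - fstar) + α ^ 2 := by
    have := hexpand
    rw [hdz'] at this
    have hh : (α / L) * (f xk - fstar) = 2 * (α * ((1/2) * (f xk - fstar)) / L) := by ring
    nlinarith [hd1, hstep1, hmono]
  refine ⟨hmain, ?_⟩
  have hheb2 : α * τ * d ^ ((1:ℝ) / δ) ≤ (α / L) * (f xk - fstar) := by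
    rw [hτ]
    have : α * (μ / L) * d ^ ((1:ℝ)/δ) = (α / L) * (μ * d ^ ((1:ℝ)/δ)) := by ring
    rw [this]
    exact mul_le_mul_of_nonneg_left hHEBxk (by positivity)
  linarith [hmain, hheb2]
end

section
/- In the Setting, let x_1, …, x_{k+1} be iterates of the projected subgradient iteration with x_i ∈ T_{1/2} for all i = 1, …, k, subgradients ζ_i with 0 < ‖ζ_i‖ ≤ L, and step-sizes α_i > 0. Then f(x_k) − f* ≤ (L·dist²(x_k, X*) + L·α_k²)/α_k, and f_k* − f* ≤ (L·dist²(x_1, X*) + L·Σ_{i=1}^{k} α_i²)/(Σ_{i=1}^{k} α_i), where f_k* := min{f(x_i) : i = 1, …, k}. -/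
open scoped RealInnerProductSpace

lemma proj_contract {E : Type*} [NormedAddCommGroup E] [InnerProductSpace ℝ E]
    {K : Set E} (hK : Convex ℝ K) {p v w : E} (hv : v ∈ K) (hw : w ∈ K)
    (hmin : ∀ y ∈ K, dist v p ≤ dist y p) : ‖v - w‖ ≤ ‖p - w‖ := by
  haveI : Nonempty K := ⟨⟨v, hv⟩⟩
  have hinf : ‖p - v‖ = ⨅ y : K, ‖p - y‖ := by
    refine le_antisymm (le_ciInf fun y => ?_) (ciInf_le (f := fun y : K => ‖p - (y : E)‖) ⟨0, by rintro _ ⟨_, rfl⟩; exact norm_nonneg _⟩ ⟨v, hv⟩)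
    have := hmin y y.2
    rwa [dist_eq_norm, dist_eq_norm, norm_sub_rev v p, norm_sub_rev (y : E) p] at this
  have hvar := (norm_eq_iInf_iff_real_inner_le_zero hK hv).mp hinf w hw
  have hexp : ‖p - w‖ ^ 2 = ‖p - v‖ ^ 2 - 2 * ⟪p - v, w - v⟫ + ‖w - v‖ ^ 2 := by
    have : p - w = (p - v) - (w - v) := by abel
    rw [this, norm_sub_sq_real]
  have h2 : ‖v - w‖ ^ 2 ≤ ‖p - w‖ ^ 2 := by
    rw [norm_sub_rev v w]
    nlinarith [sq_nonneg ‖p - v‖]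
  exact (pow_le_pow_iff_left₀ (norm_nonneg _) (norm_nonneg _) two_ne_zero).mp h2

set_option maxHeartbeats 1600000 in
/-- **Basic inequalities II.** For iterates `x_1, …, x_{k+1}` of the
projected subgradient method with `x_i ∈ T_{1/2}`, one has
`f(x_k) − f* ≤ (L dist²(x_k,X*) + L α_k²)/α_k` and
`f_k* − f* ≤ (L dist²(x_1,X*) + L Σ α_i²)/(Σ α_i)` where `f_k* = min_{1≤i≤k} f(x_i)`. -/
theorem basic_inequalities_II {n : ℕ}
    (X : Set (EuclideanSpace ℝ (Fin n))) (hXne : X.Nonempty)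
    (hXcl : IsClosed X) (hXcv : Convex ℝ X)
    (f : EuclideanSpace ℝ (Fin n) → ℝ) (hf : Continuous f)
    (fstar : ℝ) (Xstar : Set (EuclideanSpace ℝ (Fin n)))
    (hXstar : Xstar = {x ∈ X | f x = fstar}) (hXstarne : Xstar.Nonempty)
    (hfstar : ∀ x ∈ X, fstar ≤ f x)
    (ρ ν δ μ : ℝ) (hρ : 0 < ρ) (hν : ν ∈ Set.Ioc (0 : ℝ) 1)
    (hδ : δ ∈ Set.Ioc (1 / (1 + ν)) 1) (hμ : 0 < μ)
    (hHEB : ∀ x ∈ X, μ * Metric.infDist x Xstar ^ (1 / δ) ≤ f x - fstar)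
    (L : ℝ) (hL : 0 < L)
    (k : ℕ) (hk : 1 ≤ k)
    (x ζ : ℕ → EuclideanSpace ℝ (Fin n)) (α : ℕ → ℝ)
    (htube : ∀ i ∈ Finset.Icc 1 k, x i ∈ X ∧ Metric.infDist (x i) Xstar <
        ((1 / 2) * μ / ρ) ^ (δ / (δ * (1 + ν) - 1)))
    (hζsub : ∀ i ∈ Finset.Icc 1 k, ∀ y ∈ X,
        f (x i) + ⟪ζ i, y - x i⟫ - ρ * ‖y - x i‖ ^ (1 + ν) ≤ f y)
    (hζnorm : ∀ i ∈ Finset.Icc 1 k, 0 < ‖ζ i‖ ∧ ‖ζ i‖ ≤ L)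
    (hα : ∀ i ∈ Finset.Icc 1 k, 0 < α i)
    (hproj : ∀ i ∈ Finset.Icc 1 k, x (i + 1) ∈ X ∧ ∀ y ∈ X,
        dist (x (i + 1)) (x i - (α i / ‖ζ i‖) • ζ i) ≤
          dist y (x i - (α i / ‖ζ i‖) • ζ i)) :
    f (x k) - fstar ≤
        (L * Metric.infDist (x k) Xstar ^ 2 + L * α k ^ 2) / α k ∧
    (Finset.Icc 1 k).inf' (Finset.nonempty_Icc.mpr hk) (fun i => f (x i)) - fstar ≤
        (L * Metric.infDist (x 1) Xstar ^ 2 + L * ∑ i ∈ Finset.Icc 1 k, α i ^ 2) /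
          (∑ i ∈ Finset.Icc 1 k, α i) := by
  obtain ⟨hν0, hν1⟩ := hν
  obtain ⟨hδl, hδ1⟩ := hδ
  have h1ν : (0:ℝ) < 1 + ν := by linarith
  have hδ0 : 0 < δ := lt_trans (by positivity) hδl
  -- the exponent e
  set e : ℝ := 1 + ν - 1 / δ with he_def
  have hepos : 0 < e := by
    have : 1 / δ < 1 + ν := by
      rw [div_lt_iff₀ hδ0]
      have := (div_lt_iff₀ h1ν).mp hδl
      linarith [this]
    simp only [he_def]; linarith
  have hexp_eq : δ / (δ * (1 + ν) - 1) = 1 / e := by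
    rw [he_def]
    rw [div_eq_div_iff (by nlinarith [(div_lt_iff₀ h1ν).mp hδl]) (by positivity)]
    field_simp
  set c : ℝ := 1 / 2 * μ / ρ with hc_def
  have hcpos : 0 < c := by positivity
  have hXsc : IsClosed Xstar := by
    rw [hXstar]
    exact hXcl.inter (isClosed_eq hf continuous_const)
  have hXsubX : ∀ z ∈ Xstar, z ∈ X ∧ f z = fstar := by
    intro z hz; rw [hXstar] at hz; exact hz
  -- Key: tube + HEB imply ρ d^{1+ν} ≤ (1/2)(f xᵢ - f*)
  have key : ∀ i ∈ Finset.Icc 1 k,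
      ρ * Metric.infDist (x i) Xstar ^ (1 + ν) ≤ (1 / 2) * (f (x i) - fstar) := by
    intro i hi
    obtain ⟨hxX, hxT⟩ := htube i hi
    set d := Metric.infDist (x i) Xstar with hd_def
    have hd0 : 0 ≤ d := Metric.infDist_nonneg
    rcases eq_or_lt_of_le hd0 with h0 | hdpos
    · rw [← h0, Real.zero_rpow (by positivity), mul_zero]
      have := hfstar (x i) hxX
      linarith
    · have hde : d ^ e ≤ μ / (2 * ρ) := by
        have h1 : d < c ^ (1 / e) := by rwa [hexp_eq] at hxT
        have h2 : d ^ e < (c ^ (1 / e)) ^ e := Real.rpow_lt_rpow hd0 h1 hepos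
        rw [← Real.rpow_mul hcpos.le, one_div_mul_cancel (ne_of_gt hepos), Real.rpow_one] at h2
        have : c = μ / (2 * ρ) := by rw [hc_def]; ring
        linarith [h2, this ▸ h2]
      have hsplit : d ^ (1 + ν) = d ^ e * d ^ (1 / δ) := by
        rw [← Real.rpow_add hdpos]
        congr 1
        rw [he_def]; ring
      have hHEBi := hHEB (x i) hxX
      have hdδ : (0:ℝ) ≤ d ^ (1 / δ) := Real.rpow_nonneg hd0 _
      calc ρ * d ^ (1 + ν) = ρ * (d ^ e * d ^ (1 / δ)) := by rw [hsplit]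
        _ ≤ ρ * (μ / (2 * ρ) * d ^ (1 / δ)) := by
            apply mul_le_mul_of_nonneg_left (mul_le_mul_of_nonneg_right hde hdδ) hρ.le
        _ = (1 / 2) * (μ * d ^ (1 / δ)) := by field_simp
        _ ≤ (1 / 2) * (f (x i) - fstar) := by linarith [hHEBi]
  -- Key2: inner product lower bound at the nearest optimal point
  have key2 : ∀ i ∈ Finset.Icc 1 k, ∀ z ∈ Xstar, dist (x i) z = Metric.infDist (x i) Xstar →
      (1 / 2) * (f (x i) - fstar) ≤ ⟪ζ i, x i - z⟫ := by
    intro i hi z hz hdz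
    obtain ⟨hzX, hzf⟩ := hXsubX z hz
    have hs := hζsub i hi z hzX
    rw [hzf] at hs
    have hnorm : ‖z - x i‖ = Metric.infDist (x i) Xstar := by
      rw [← hdz, dist_comm, dist_eq_norm]
    have hinner : ⟪ζ i, z - x i⟫ = -⟪ζ i, x i - z⟫ := by
      rw [← inner_neg_right, neg_sub]
    rw [hnorm, hinner] at hs
    have hk2 := key i hi
    linarith
  -- FIRST INEQUALITY
  have hkk : k ∈ Finset.Icc 1 k := Finset.mem_Icc.mpr ⟨hk, le_rfl⟩
  constructor
  · obtain ⟨z, hz, hdz⟩ := hXsc.exists_infDist_eq_dist hXstarne (x k)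
    set d := Metric.infDist (x k) Xstar with hd_def
    obtain ⟨hzX, hzf⟩ := hXsubX z hz
    have hs := hζsub k hkk z hzX
    rw [hzf] at hs
    have hnorm : ‖z - x k‖ = d := by rw [← dist_eq_norm, dist_comm]; exact hdz.symm
    have hinner : ⟪ζ k, z - x k⟫ = -⟪ζ k, x k - z⟫ := by
      rw [← inner_neg_right, neg_sub]
    rw [hnorm, hinner] at hs
    have hcs : ⟪ζ k, x k - z⟫ ≤ L * d := by
      calc ⟪ζ k, x k - z⟫ ≤ ‖ζ k‖ * ‖x k - z‖ := real_inner_le_norm _ _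
        _ ≤ L * d := by
            rw [norm_sub_rev, hnorm]
            exact mul_le_mul_of_nonneg_right (hζnorm k hkk).2 Metric.infDist_nonneg
    have hkey := key k hkk
    have h2Ld : f (x k) - fstar ≤ 2 * L * d := by linarith
    have hαk : 0 < α k := hα k hkk
    rw [le_div_iff₀ hαk]
    have hd0 : 0 ≤ d := Metric.infDist_nonneg
    nlinarith [sq_nonneg (d - α k), mul_le_mul_of_nonneg_right h2Ld hαk.le,
      mul_nonneg hL.le (sq_nonneg (d - α k))]
  -- SECOND INEQUALITY
  · -- one-step decrease
    have hstep : ∀ i ∈ Finset.Icc 1 k,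
        Metric.infDist (x (i + 1)) Xstar ^ 2 ≤
          Metric.infDist (x i) Xstar ^ 2 + α i ^ 2 - (α i / L) * (f (x i) - fstar) := by
      intro i hi
      obtain ⟨z, hz, hdz⟩ := hXsc.exists_infDist_eq_dist hXstarne (x i)
      obtain ⟨hzX, hzf⟩ := hXsubX z hz
      obtain ⟨hζpos, hζL⟩ := hζnorm i hi
      have hαi : 0 < α i := hα i hi
      set t : ℝ := α i / ‖ζ i‖ with ht_def
      have htpos : 0 < t := by positivity
      set p : EuclideanSpace ℝ (Fin n) := x i - t • ζ i with hp_def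
      obtain ⟨hx1X, hx1min⟩ := hproj i hi
      have hcontract : ‖x (i + 1) - z‖ ≤ ‖p - z‖ :=
        proj_contract hXcv hx1X hzX hx1min
      have hDi1 : Metric.infDist (x (i + 1)) Xstar ≤ ‖x (i + 1) - z‖ := by
        rw [← dist_eq_norm]
        exact Metric.infDist_le_dist_of_mem hz
      have htζ : t * ‖ζ i‖ = α i := by
        rw [ht_def]; field_simp
      have hexpand : ‖p - z‖ ^ 2 = ‖x i - z‖ ^ 2 - 2 * t * ⟪ζ i, x i - z⟫ + α i ^ 2 := by
        have h1 : p - z = (x i - z) - t • ζ i := by rw [hp_def]; abel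
        rw [h1, norm_sub_sq_real, real_inner_smul_right, norm_smul, Real.norm_eq_abs,
          abs_of_pos htpos, mul_pow]
        have : t ^ 2 * ‖ζ i‖ ^ 2 = (t * ‖ζ i‖) ^ 2 := by ring
        rw [this, htζ, real_inner_comm]
        ring
      have hinner := key2 i hi z hz hdz.symm
      have hfge : 0 ≤ f (x i) - fstar := by
        have := hfstar (x i) (htube i hi).1
        linarith
      have htge : α i / L ≤ t := by
        rw [ht_def]
        exact div_le_div_of_nonneg_left hαi.le hζpos hζL
      have hnormxz : ‖x i - z‖ = Metric.infDist (x i) Xstar := by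
        rw [← dist_eq_norm, ← hdz]
      have hsq : Metric.infDist (x (i + 1)) Xstar ^ 2 ≤ ‖p - z‖ ^ 2 := by
        have h1 : Metric.infDist (x (i + 1)) Xstar ^ 2 ≤ ‖x (i + 1) - z‖ ^ 2 :=
          pow_le_pow_left₀ Metric.infDist_nonneg hDi1 2
        have h2 : ‖x (i + 1) - z‖ ^ 2 ≤ ‖p - z‖ ^ 2 :=
          pow_le_pow_left₀ (norm_nonneg _) hcontract 2
        linarith
      rw [hexpand, hnormxz] at hsq
      have hbound : (α i / L) * (f (x i) - fstar) ≤ 2 * t * ⟪ζ i, x i - z⟫ := by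
        have h1 : t * (f (x i) - fstar) ≤ 2 * t * ⟪ζ i, x i - z⟫ := by
          nlinarith [mul_le_mul_of_nonneg_left hinner (by linarith : (0:ℝ) ≤ 2 * t)]
        have h2 : (α i / L) * (f (x i) - fstar) ≤ t * (f (x i) - fstar) :=
          mul_le_mul_of_nonneg_right htge hfge
        linarith
      linarith
    -- telescoping sum
    have hsum : ∀ j, j ≤ k →
        ∑ i ∈ Finset.Icc 1 j, (α i / L) * (f (x i) - fstar) ≤
          Metric.infDist (x 1) Xstar ^ 2 - Metric.infDist (x (j + 1)) Xstar ^ 2 +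
            ∑ i ∈ Finset.Icc 1 j, α i ^ 2 := by
      intro j
      induction j with
      | zero => intro _; simp
      | succ j ih =>
        intro hjk
        have hj : j ≤ k := le_trans (Nat.le_succ j) hjk
        have ihj := ih hj
        rw [Finset.sum_Icc_succ_top (by omega : 1 ≤ j + 1),
          Finset.sum_Icc_succ_top (by omega : 1 ≤ j + 1)]
        have hs := hstep (j + 1) (Finset.mem_Icc.mpr ⟨by omega, hjk⟩)
        linarith
    have hsumk := hsum k le_rfl
    have hDk1 : 0 ≤ Metric.infDist (x (k + 1)) Xstar ^ 2 := sq_nonneg _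
    set S := ∑ i ∈ Finset.Icc 1 k, α i with hS_def
    have hSpos : 0 < S := Finset.sum_pos hα (Finset.nonempty_Icc.mpr hk)
    set m := (Finset.Icc 1 k).inf' (Finset.nonempty_Icc.mpr hk) (fun i => f (x i)) with hm_def
    -- relate the two sums
    have hmulL : ∑ i ∈ Finset.Icc 1 k, α i * (f (x i) - fstar) =
        L * ∑ i ∈ Finset.Icc 1 k, (α i / L) * (f (x i) - fstar) := by
      rw [Finset.mul_sum]
      apply Finset.sum_congr rfl
      intro i _
      field_simp
    have hT : ∑ i ∈ Finset.Icc 1 k, α i * (f (x i) - fstar) ≤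
        L * (Metric.infDist (x 1) Xstar ^ 2 + ∑ i ∈ Finset.Icc 1 k, α i ^ 2) := by
      rw [hmulL]
      apply mul_le_mul_of_nonneg_left _ hL.le
      linarith
    have hlow : (m - fstar) * S ≤ ∑ i ∈ Finset.Icc 1 k, α i * (f (x i) - fstar) := by
      have h1 : (m - fstar) * S = ∑ i ∈ Finset.Icc 1 k, α i * (m - fstar) := by
        rw [hS_def, Finset.mul_sum]
        apply Finset.sum_congr rfl
        intro i _; ring
      rw [h1]
      apply Finset.sum_le_sum
      intro i hi
      have hmle : m ≤ f (x i) := Finset.inf'_le _ hi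
      exact mul_le_mul_of_nonneg_left (by linarith) (hα i hi).le
    rw [le_div_iff₀ hSpos]
    calc (m - fstar) * S ≤ ∑ i ∈ Finset.Icc 1 k, α i * (f (x i) - fstar) := hlow
      _ ≤ L * (Metric.infDist (x 1) Xstar ^ 2 + ∑ i ∈ Finset.Icc 1 k, α i ^ 2) := hT
      _ = L * Metric.infDist (x 1) Xstar ^ 2 + L * ∑ i ∈ Finset.Icc 1 k, α i ^ 2 := by ring
end

section
/- In the Setting, let τ := μ/L and fix a constant step-size α with 0 < α < min{(2δ/τ)·(μ/(2ρ))^{(2δ−1)/(δ(ν+1)−1)}, (τ/(τ^{2δ}+1)^{1/(2δ)})·(μ/(2ρ))^{1/(δ(ν+1)−1)}, 1}. Let (x_k)_{k≥0} be generated by the projected subgradient iteration with α_k = α and x_0 ∈ T_{1/2}. Define D_k := dist²(x_k, X*), D_* := (α/τ)^{2δ}, q := 1 − (ατ/(2δ))·(2ρ/μ)^{(2δ−1)/(δ(1+ν)−1)}, and 𝒟² := max{D_0, α² + D_*}. Then 0 < q < 1, and for every k ∈ ℕ: √(D_k) ≤ 𝒟 ≤ (μ/(2ρ))^{δ/(δ(1+ν)−1)},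 and D_k − D_* ≤ max{q^k (D_0 − D_*), α²}. -/
open scoped RealInnerProductSpace

set_option maxHeartbeats 1000000

private lemma concave_rpow_aux {a b θ : ℝ} (ha : 0 ≤ a) (hb : 0 < b)
    (hθ0 : 0 < θ) (hθ1 : θ ≤ 1) :
    θ * b ^ (θ - 1) * (b - a) ≤ b ^ θ - a ^ θ := by
  have hs : (-1 : ℝ) ≤ a / b - 1 := by
    have : 0 ≤ a / b := div_nonneg ha hb.le
    linarith
  have hbern := rpow_one_add_le_one_add_mul_self hs hθ0.le hθ1
  have h1ab : (1 : ℝ) + (a / b - 1) = a / b := by ring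
  rw [h1ab] at hbern
  have hbθ : 0 < b ^ θ := Real.rpow_pos_of_pos hb θ
  have h1 : (a / b) ^ θ = a ^ θ / b ^ θ := Real.div_rpow ha hb.le θ
  have h2 : b ^ (θ - 1) = b ^ θ / b := by
    rw [Real.rpow_sub hb, Real.rpow_one]
  have h3 := mul_le_mul_of_nonneg_right hbern hbθ.le
  rw [h1, div_mul_cancel₀ _ hbθ.ne'] at h3
  have key : (1 + θ * (a / b - 1)) * b ^ θ = b ^ θ - θ * (b ^ θ / b) * (b - a) := by
    field_simp
    ring
  rw [key, ← h2] at h3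
  linarith

private lemma proj_nonexpansive {E : Type*} [NormedAddCommGroup E] [InnerProductSpace ℝ E]
    {K : Set E} (hK : Convex ℝ K) {p z w : E} (hp : p ∈ K) (hw : w ∈ K)
    (hmin : ∀ y ∈ K, dist p z ≤ dist y z) :
    ‖p - w‖ ≤ ‖z - w‖ := by
  haveI : Nonempty K := ⟨⟨p, hp⟩⟩
  have hbdd : BddBelow (Set.range fun y : K => ‖z - (y : E)‖) :=
    ⟨0, Set.forall_mem_range.mpr fun y => norm_nonneg _⟩
  have hinf : ‖z - p‖ = ⨅ y : K, ‖z - y‖ := by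
    apply le_antisymm
    · apply le_ciInf
      intro y
      have h := hmin y y.2
      rwa [dist_eq_norm, dist_eq_norm, norm_sub_rev p z, norm_sub_rev (y : E) z] at h
    · exact ciInf_le hbdd ⟨p, hp⟩
  have hVI := (norm_eq_iInf_iff_real_inner_le_zero hK hp).mp hinf w hw
  have expand : ‖z - w‖ ^ 2 = ‖z - p‖ ^ 2 - 2 * ⟪z - p, w - p⟫ + ‖w - p‖ ^ 2 := by
    have h : z - w = (z - p) - (w - p) := by abel
    rw [h, norm_sub_sq_real]
  have hsq : ‖p - w‖ ^ 2 ≤ ‖z - w‖ ^ 2 := by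
    rw [norm_sub_rev p w]
    nlinarith [sq_nonneg ‖z - p‖]
  calc ‖p - w‖ = Real.sqrt (‖p - w‖ ^ 2) := (Real.sqrt_sq (norm_nonneg _)).symm
    _ ≤ Real.sqrt (‖z - w‖ ^ 2) := Real.sqrt_le_sqrt hsq
    _ = ‖z - w‖ := Real.sqrt_sq (norm_nonneg _)

/-- **Convergence of the constant step-size method.** With a suitable
constant step-size `α` and `x_0 ∈ T_{1/2}`, the squared distances
`D_k = dist²(x_k, X*)` satisfy `√D_k ≤ 𝒟 ≤ (μ/(2ρ))^{δ/(δ(1+ν)−1)}` and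
`D_k − D_* ≤ max{q^k (D_0 − D_*), α²}`, where `0 < q < 1`. -/
theorem constant_stepsize_convergence {n : ℕ}
    (X : Set (EuclideanSpace ℝ (Fin n))) (hXne : X.Nonempty)
    (hXcl : IsClosed X) (hXcv : Convex ℝ X)
    (f : EuclideanSpace ℝ (Fin n) → ℝ) (hf : Continuous f)
    (fstar : ℝ) (Xstar : Set (EuclideanSpace ℝ (Fin n)))
    (hXstar : Xstar = {x ∈ X | f x = fstar}) (hXstarne : Xstar.Nonempty)
    (hfstar : ∀ x ∈ X, fstar ≤ f x)
    (ρ ν δ μ : ℝ) (hρ : 0 < ρ) (hν : ν ∈ Set.Ioc (0 : ℝ) 1)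
    (hδ : δ ∈ Set.Ioc (1 / (1 + ν)) 1) (hμ : 0 < μ)
    (hHEB : ∀ x ∈ X, μ * Metric.infDist x Xstar ^ (1 / δ) ≤ f x - fstar)
    (L : ℝ) (hL : 0 < L) (τ : ℝ) (hτ : τ = μ / L)
    (α : ℝ) (hα0 : 0 < α)
    (hαlt : α < min (min ((2 * δ / τ) * (μ / (2 * ρ)) ^ ((2 * δ - 1) / (δ * (ν + 1) - 1)))
        ((τ / (τ ^ (2 * δ) + 1) ^ (1 / (2 * δ))) *
          (μ / (2 * ρ)) ^ (1 / (δ * (ν + 1) - 1)))) 1)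
    (x ζ : ℕ → EuclideanSpace ℝ (Fin n))
    (hx0 : x 0 ∈ X ∧ Metric.infDist (x 0) Xstar <
        ((1 / 2) * μ / ρ) ^ (δ / (δ * (1 + ν) - 1)))
    (hζsub : ∀ k, ∀ y ∈ X,
        f (x k) + ⟪ζ k, y - x k⟫ - ρ * ‖y - x k‖ ^ (1 + ν) ≤ f y)
    (hζL : ∀ k, ‖ζ k‖ ≤ L)
    (hupd : ∀ k, (ζ k = 0 → x (k + 1) = x k) ∧
        (ζ k ≠ 0 → x (k + 1) ∈ X ∧ ∀ y ∈ X,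
          dist (x (k + 1)) (x k - (α / ‖ζ k‖) • ζ k) ≤
            dist y (x k - (α / ‖ζ k‖) • ζ k)))
    (D : ℕ → ℝ) (hD : ∀ k, D k = Metric.infDist (x k) Xstar ^ 2)
    (Dstar : ℝ) (hDstar : Dstar = (α / τ) ^ (2 * δ))
    (q : ℝ) (hq : q = 1 - (α * τ / (2 * δ)) * (2 * ρ / μ) ^ ((2 * δ - 1) / (δ * (1 + ν) - 1)))
    (Dcal : ℝ) (hDcal : Dcal = Real.sqrt (max (D 0) (α ^ 2 + Dstar))) :
    (0 < q ∧ q < 1) ∧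
    ∀ k : ℕ,
      (Real.sqrt (D k) ≤ Dcal ∧ Dcal ≤ (μ / (2 * ρ)) ^ (δ / (δ * (1 + ν) - 1))) ∧
      D k - Dstar ≤ max (q ^ k * (D 0 - Dstar)) (α ^ 2) := by
  obtain ⟨hν0, hν1⟩ := hν
  obtain ⟨hδlb, hδ1⟩ := hδ
  have h1ν : (0:ℝ) < 1 + ν := by linarith
  have hδ0 : 0 < δ := lt_trans (div_pos one_pos h1ν) hδlb
  have hδ2 : (0:ℝ) < 2 * δ := by linarith
  rw [show δ * (ν + 1) - 1 = δ * (1 + ν) - 1 by ring] at hαlt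
  have hE : 0 < δ * (1 + ν) - 1 := by
    have h := (div_lt_iff₀ h1ν).mp hδlb
    linarith
  set E := δ * (1 + ν) - 1 with hEdef
  have hEne : E ≠ 0 := ne_of_gt hE
  have hδne : δ ≠ 0 := ne_of_gt hδ0
  have hμ2ρ : (0:ℝ) < μ / (2*ρ) := by positivity
  have hτ0 : 0 < τ := by rw [hτ]; positivity
  have hα1 : α < 1 := lt_of_lt_of_le hαlt (min_le_right _ _)
  have hαA : α < 2 * δ / τ * (μ / (2*ρ)) ^ ((2*δ-1)/E) :=
    lt_of_lt_of_le hαlt ((min_le_left _ _).trans (min_le_left _ _))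
  have hαB : α < τ / (τ ^ (2*δ) + 1) ^ (1/(2*δ)) * (μ / (2*ρ)) ^ (1/E) :=
    lt_of_lt_of_le hαlt ((min_le_left _ _).trans (min_le_right _ _))
  -- q facts
  have hPpos : (0:ℝ) < (2*ρ/μ) ^ ((2*δ-1)/E) := Real.rpow_pos_of_pos (by positivity) _
  have hinvbase : ((2*ρ/μ) : ℝ)⁻¹ = μ/(2*ρ) := by rw [inv_div]
  have hPinv : (μ/(2*ρ)) ^ ((2*δ-1)/E) = ((2*ρ/μ) ^ ((2*δ-1)/E))⁻¹ := by
    rw [← hinvbase, ← Real.inv_rpow (by positivity : (0:ℝ) ≤ 2*ρ/μ)]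
  have hq1' : (α * τ / (2*δ)) * (2*ρ/μ) ^ ((2*δ-1)/E) < 1 := by
    rw [hPinv] at hαA
    have h2 := mul_lt_mul_of_pos_right hαA
      (by positivity : 0 < τ * (2*ρ/μ) ^ ((2*δ-1)/E))
    have hrhs : 2*δ/τ * ((2*ρ/μ) ^ ((2*δ-1)/E))⁻¹ * (τ * (2*ρ/μ) ^ ((2*δ-1)/E)) = 2*δ := by
      field_simp
    rw [hrhs] at h2
    rw [div_mul_eq_mul_div, div_lt_one hδ2]
    linarith only [h2]
  have hq0 : 0 < q := by rw [hq]; linarith only [hq1']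
  have hqlt1 : q < 1 := by
    rw [hq]
    have h : 0 < (α*τ/(2*δ)) * (2*ρ/μ)^((2*δ-1)/E) := by positivity
    linarith
  -- R facts
  set Rv := (μ/(2*ρ)) ^ (δ/E) with hRv
  have hRpos : 0 < Rv := Real.rpow_pos_of_pos hμ2ρ _
  have hR2 : Rv^2 = (μ/(2*ρ)) ^ (2*δ/E) := by
    rw [hRv, sq, ← Real.rpow_add hμ2ρ]
    congr 1
    ring
  have hbase0 : (1/2 : ℝ) * μ / ρ = μ / (2*ρ) := by ring
  have hd0R : Metric.infDist (x 0) Xstar < Rv := by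
    have h := hx0.2
    rwa [hbase0] at h
  have hd00 : 0 ≤ Metric.infDist (x 0) Xstar := Metric.infDist_nonneg
  have hD0 : D 0 ≤ Rv^2 := by
    rw [hD 0]
    nlinarith only [hd0R, hd00, hRpos]
  have hD0nonneg : 0 ≤ D 0 := by rw [hD 0]; positivity
  -- Dstar facts
  have hDstar0 : 0 < Dstar := by
    rw [hDstar]; exact Real.rpow_pos_of_pos (by positivity) _
  have hDstarRoot : Dstar ^ (1/(2*δ)) = α/τ := by
    rw [hDstar, ← Real.rpow_mul (by positivity : (0:ℝ) ≤ α/τ),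
      show (2*δ)*(1/(2*δ)) = 1 by field_simp, Real.rpow_one]
  have hα2le : α^2 ≤ α ^ (2*δ) := by
    have h := Real.rpow_le_rpow_of_exponent_ge hα0 hα1.le (by linarith : 2*δ ≤ (2:ℝ))
    rwa [show (2:ℝ) = ((2:ℕ):ℝ) by norm_num, Real.rpow_natCast] at h
  have hαDstar : α^2 + Dstar ≤ Rv^2 := by
    set C := (τ ^ (2*δ) + 1) ^ (1/(2*δ)) with hC
    have hτ2δ : 0 < τ ^ (2*δ) := Real.rpow_pos_of_pos hτ0 _
    have hCpos : 0 < C := Real.rpow_pos_of_pos (by linarith) _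
    have hC2δ : C ^ (2*δ) = τ^(2*δ) + 1 := by
      rw [hC, ← Real.rpow_mul (by linarith : (0:ℝ) ≤ τ^(2*δ)+1),
        show (1/(2*δ))*(2*δ) = 1 by field_simp, Real.rpow_one]
    have hBpos : 0 < (μ/(2*ρ)) ^ ((2:ℝ)*δ/E) := Real.rpow_pos_of_pos hμ2ρ _
    have h1 : α ^ (2*δ) ≤ (τ / C * (μ/(2*ρ))^(1/E)) ^ (2*δ) :=
      Real.rpow_le_rpow hα0.le hαB.le (by linarith)
    have h2 : (τ / C * (μ/(2*ρ))^(1/E)) ^ (2*δ)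
        = τ^(2*δ) / (τ^(2*δ)+1) * (μ/(2*ρ))^(2*δ/E) := by
      rw [Real.mul_rpow (by positivity) (by positivity),
        Real.div_rpow hτ0.le hCpos.le, hC2δ,
        ← Real.rpow_mul hμ2ρ.le, show (1/E)*(2*δ) = 2*δ/E by ring]
    have h3 : α^(2*δ) * (τ^(2*δ)+1) ≤ τ^(2*δ) * (μ/(2*ρ))^(2*δ/E) := by
      rw [h2] at h1
      have h1' := mul_le_mul_of_nonneg_right h1
        (by linarith : (0:ℝ) ≤ τ^(2*δ)+1)
      calc α^(2*δ) * (τ^(2*δ)+1)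
          ≤ τ^(2*δ)/(τ^(2*δ)+1) * (μ/(2*ρ))^(2*δ/E) * (τ^(2*δ)+1) := h1'
        _ = τ^(2*δ) * (μ/(2*ρ))^(2*δ/E) * ((τ^(2*δ)+1)/(τ^(2*δ)+1)) := by ring
        _ = τ^(2*δ) * (μ/(2*ρ))^(2*δ/E) := by
            rw [div_self (by linarith : (τ^(2*δ)+1) ≠ 0), mul_one]
    have hDstar' : Dstar = α^(2*δ)/τ^(2*δ) := by
      rw [hDstar, Real.div_rpow hα0.le hτ0.le]
    have hu : α^(2*δ)/τ^(2*δ) * τ^(2*δ) = α^(2*δ) := div_mul_cancel₀ _ hτ2δ.ne'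
    have h5 : (α^(2*δ) + α^(2*δ)/τ^(2*δ)) * τ^(2*δ) ≤ (μ/(2*ρ))^(2*δ/E) * τ^(2*δ) := by
      rw [add_mul, hu]
      linarith only [h3]
    have h6 : α^(2*δ) + α^(2*δ)/τ^(2*δ) ≤ (μ/(2*ρ))^(2*δ/E) :=
      le_of_mul_le_mul_right h5 hτ2δ
    rw [hR2, hDstar']
    linarith only [hα2le, h6]
  -- Dcal facts
  have hmax0 : 0 ≤ max (D 0) (α^2 + Dstar) := le_max_of_le_left hD0nonneg
  have hDcalSq : Dcal^2 = max (D 0) (α^2 + Dstar) := by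
    rw [hDcal, Real.sq_sqrt hmax0]
  have hDcal0 : 0 ≤ Dcal := by rw [hDcal]; exact Real.sqrt_nonneg _
  have hDcalRv : Dcal ≤ Rv := by
    rw [hDcal]
    calc Real.sqrt (max (D 0) (α^2+Dstar)) ≤ Real.sqrt (Rv^2) :=
          Real.sqrt_le_sqrt (max_le hD0 hαDstar)
      _ = Rv := Real.sqrt_sq hRpos.le
  have hDcalSqRv : Dcal^2 ≤ Rv^2 := by nlinarith only [hDcalRv, hDcal0, hRpos]
  -- Xstar facts
  have hXsub : Xstar ⊆ X := by rw [hXstar]; exact fun y hy => hy.1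
  have hXscl : IsClosed Xstar := by
    rw [hXstar, show {y ∈ X | f y = fstar} = X ∩ f ⁻¹' {fstar} by ext y; simp]
    exact hXcl.inter (isClosed_singleton.preimage hf)
  have hfXs : ∀ y ∈ Xstar, f y = fstar := by rw [hXstar]; exact fun y hy => hy.2
  have hpow_eq : ∀ t : ℝ, 0 ≤ t → (t^2) ^ (1/(2*δ)) = t ^ (1/δ) := by
    intro t ht
    rw [← Real.rpow_natCast t 2, ← Real.rpow_mul ht,
      show ((2:ℕ):ℝ)*(1/(2*δ)) = 1/δ by push_cast; field_simp]
  -- one-step estimate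
  have step : ∀ k, x k ∈ X → Metric.infDist (x k) Xstar ≤ Rv →
      x (k+1) ∈ X ∧ D (k+1) ≤ D k - α*τ*(Metric.infDist (x k) Xstar)^(1/δ) + α^2 := by
    intro k hkX hdR
    set d := Metric.infDist (x k) Xstar with hd
    have hd0 : 0 ≤ d := Metric.infDist_nonneg
    obtain ⟨xs, hxsXs, hdist⟩ := hXscl.exists_infDist_eq_dist hXstarne (x k)
    have hxsX : xs ∈ X := hXsub hxsXs
    have hfxs : f xs = fstar := hfXs xs hxsXs
    have hdpow0 : 0 ≤ d ^ (1/δ) := Real.rpow_nonneg hd0 _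
    have htube : ρ * d ^ (1+ν) ≤ μ/2 * d ^ (1/δ) := by
      rcases eq_or_lt_of_le hd0 with h0 | h0
      · rw [← h0, Real.zero_rpow (by positivity : (0:ℝ) < 1+ν).ne',
          Real.zero_rpow (by positivity : (0:ℝ) < 1/δ).ne']
        simp
      · have hsplit : d ^ (1+ν) = d ^ (1/δ) * d ^ (E/δ) := by
          rw [← Real.rpow_add h0]
          congr 1
          rw [hEdef]
          field_simp
          try ring
        have hdE : d ^ (E/δ) ≤ μ/(2*ρ) := by
          calc d ^ (E/δ) ≤ Rv ^ (E/δ) :=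
                Real.rpow_le_rpow hd0 hdR (le_of_lt (div_pos hE hδ0))
            _ = μ/(2*ρ) := by
                rw [hRv, ← Real.rpow_mul hμ2ρ.le,
                  show δ/E*(E/δ) = 1 by field_simp, Real.rpow_one]
        calc ρ * d^(1+ν) = ρ * d^(E/δ) * d^(1/δ) := by rw [hsplit]; ring
          _ ≤ ρ * (μ/(2*ρ)) * d^(1/δ) := by
              apply mul_le_mul_of_nonneg_right _ hdpow0
              exact mul_le_mul_of_nonneg_left hdE hρ.le
          _ = μ/2 * d^(1/δ) := by
              rw [show ρ * (μ/(2*ρ)) = μ/2 by field_simp]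
    have hHEBk := hHEB (x k) hkX
    have hnormxs : ‖xs - x k‖ = d := by
      rw [norm_sub_rev, ← dist_eq_norm]
      exact hdist.symm
    have hsubk := hζsub k xs hxsX
    rw [hfxs, hnormxs] at hsubk
    have hinner : μ/2 * d^(1/δ) ≤ ⟪ζ k, x k - xs⟫ := by
      have h1 : ⟪ζ k, xs - x k⟫ = -⟪ζ k, x k - xs⟫ := by
        rw [← inner_neg_right]
        congr 1
        abel
      rw [h1] at hsubk
      linarith [htube, hHEBk]
    by_cases hζ0 : ζ k = 0
    · have hxx : x (k+1) = x k := (hupd k).1 hζ0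
      have hinner0 : μ/2 * d^(1/δ) ≤ 0 := by
        rw [hζ0, inner_zero_left] at hinner
        exact hinner
      have hdpz : d ^ (1/δ) = 0 := le_antisymm (by nlinarith only [hinner0, hμ, hdpow0]) hdpow0
      refine ⟨hxx ▸ hkX, ?_⟩
      rw [hD (k+1), hD k, hxx, ← hd, hdpz]
      have : α*τ*(0:ℝ) = 0 := mul_zero _
      linarith only [sq_nonneg α, this]
    · obtain ⟨hmem, hproj⟩ := (hupd k).2 hζ0
      have hζpos : 0 < ‖ζ k‖ := norm_pos_iff.mpr hζ0
      have hnonexp : ‖x (k+1) - xs‖ ≤ ‖x k - (α/‖ζ k‖) • ζ k - xs‖ :=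
        proj_nonexpansive hXcv hmem hxsX hproj
      have hinf1 : Metric.infDist (x (k+1)) Xstar ≤ ‖x k - (α/‖ζ k‖) • ζ k - xs‖ := by
        refine le_trans (Metric.infDist_le_dist_of_mem hxsXs) ?_
        rw [dist_eq_norm]
        exact hnonexp
      have hDk1 : D (k+1) ≤ ‖x k - (α/‖ζ k‖) • ζ k - xs‖^2 := by
        rw [hD (k+1)]
        exact pow_le_pow_left₀ Metric.infDist_nonneg hinf1 2
      have hexp : ‖x k - (α/‖ζ k‖) • ζ k - xs‖^2
          = ‖x k - xs‖^2 - 2*((α/‖ζ k‖) * ⟪ζ k, x k - xs⟫) + α^2 := by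
        have h1 : x k - (α/‖ζ k‖) • ζ k - xs = (x k - xs) - (α/‖ζ k‖) • ζ k := by abel
        rw [h1, norm_sub_sq_real, real_inner_smul_right, norm_smul,
          Real.norm_eq_abs, abs_of_pos (by positivity : 0 < α/‖ζ k‖), mul_pow,
          div_pow, div_mul_cancel₀ _ (pow_ne_zero 2 hζpos.ne'), real_inner_comm]
        try ring
      have hnormd : ‖x k - xs‖ = d := by
        rw [← dist_eq_norm]
        exact hdist.symm
      have hIpos : 0 ≤ ⟪ζ k, x k - xs⟫ :=
        le_trans (mul_nonneg (by positivity) hdpow0) hinner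
      have hfrac : α/L ≤ α/‖ζ k‖ := by
        apply div_le_div_of_nonneg_left hα0.le hζpos (hζL k)
      have hIbound : α*τ*d^(1/δ) ≤ 2*((α/‖ζ k‖) * ⟪ζ k, x k - xs⟫) := by
        have h1 : (α/L) * (μ/2*d^(1/δ)) ≤ (α/‖ζ k‖) * ⟪ζ k, x k - xs⟫ :=
          mul_le_mul hfrac hinner (mul_nonneg (by positivity) hdpow0) (by positivity)
        have h2 : α*τ*d^(1/δ) = 2*((α/L) * (μ/2*d^(1/δ))) := by
          rw [hτ]
          field_simp
        rw [h2]
        linarith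
      refine ⟨hmem, ?_⟩
      have hDkeq : ‖x k - xs‖^2 = D k := by rw [hD k, hnormd]
      rw [hDkeq] at hexp
      linarith only [hDk1, hexp.le, hIbound]
  -- the invariant, by induction
  have inv : ∀ k, x k ∈ X ∧ D k ≤ Dcal^2 ∧
      D k - Dstar ≤ max (q^k * (D 0 - Dstar)) (α^2) := by
    intro k
    induction k with
    | zero =>
      refine ⟨hx0.1, ?_, ?_⟩
      · rw [hDcalSq]
        exact le_max_left _ _
      · simp only [pow_zero, one_mul]
        exact le_max_left _ _
    | succ k ih =>
      obtain ⟨hkX, hkD, hkC⟩ := ih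
      have hd0 : 0 ≤ Metric.infDist (x k) Xstar := Metric.infDist_nonneg
      have hDkd : D k = (Metric.infDist (x k) Xstar)^2 := hD k
      have hdsq : (Metric.infDist (x k) Xstar)^2 ≤ Rv^2 := by
        rw [← hDkd]
        linarith only [hkD, hDcalSqRv]
      have hdR : Metric.infDist (x k) Xstar ≤ Rv := by
        nlinarith only [hdsq, hd0, hRpos]
      obtain ⟨hmemX, hkey⟩ := step k hkX hdR
      set d := Metric.infDist (x k) Xstar with hd
      have hθpos : (0:ℝ) < 1/(2*δ) := by positivity
      have hθle : 1/(2*δ) ≤ 1 := by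
        rw [div_le_one hδ2]
        have : (1:ℝ)/2 ≤ 1/(1+ν) := by
          rw [div_le_div_iff₀ (by norm_num) h1ν]
          linarith
        linarith
      have hdpow : d ^ (1/δ) = (D k) ^ (1/(2*δ)) := by
        rw [hDkd, hpow_eq d hd0]
      have hdpow0 : 0 ≤ α*τ*d^(1/δ) :=
        mul_nonneg (by positivity) (Real.rpow_nonneg hd0 _)
      refine ⟨hmemX, ?_, ?_⟩
      · rcases le_or_gt Dstar (D k) with hcase | hcase
        · have h1 : α/τ ≤ (D k)^(1/(2*δ)) := by
            rw [← hDstarRoot]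
            exact Real.rpow_le_rpow hDstar0.le hcase hθpos.le
          have h2 : α^2 ≤ α*τ*d^(1/δ) := by
            rw [hdpow]
            calc α^2 = α*τ*(α/τ) := by field_simp
              _ ≤ α*τ*(D k)^(1/(2*δ)) :=
                mul_le_mul_of_nonneg_left h1 (by positivity)
          linarith only [hkey, hkD, h2]
        · rw [hDcalSq]
          refine le_trans ?_ (le_max_right _ _)
          linarith only [hkey, hdpow0, hcase]
      · rcases le_or_gt (D k) Dstar with hcase | hcase
        · have h1 : D (k+1) - Dstar ≤ α^2 := by linarith only [hkey, hdpow0, hcase]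
          exact le_trans h1 (le_max_right _ _)
        · have hDkpos : 0 < D k := lt_trans hDstar0 hcase
          have hDkR2 : D k ≤ Rv^2 := le_trans hkD hDcalSqRv
          have hconc := concave_rpow_aux hDstar0.le hDkpos hθpos hθle
          have hbasemono : (Rv^2)^(1/(2*δ)-1) ≤ (D k)^(1/(2*δ)-1) :=
            Real.rpow_le_rpow_of_nonpos hDkpos hDkR2 (by linarith)
          have hRexp : (Rv^2)^(1/(2*δ)-1) = (2*ρ/μ)^((2*δ-1)/E) := by
            rw [hR2, ← Real.rpow_mul hμ2ρ.le,
              show 2*δ/E*(1/(2*δ)-1) = -((2*δ-1)/E) by field_simp; ring,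
              Real.rpow_neg hμ2ρ.le, hPinv, inv_inv]
          have hqid : 1 - q = α*τ/(2*δ)*((Rv^2)^(1/(2*δ)-1)) := by
            rw [hq, hRexp]
            ring
          have hchain : (1-q)*(D k - Dstar)
              ≤ α*τ*((D k)^(1/(2*δ)) - Dstar^(1/(2*δ))) := by
            calc (1-q)*(D k - Dstar)
                = (α*τ)*(1/(2*δ)*((Rv^2)^(1/(2*δ)-1))*(D k - Dstar)) := by
                  rw [hqid]; ring
              _ ≤ (α*τ)*(1/(2*δ)*((D k)^(1/(2*δ)-1))*(D k - Dstar)) := by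
                  apply mul_le_mul_of_nonneg_left _ (by positivity)
                  apply mul_le_mul_of_nonneg_right _ (by linarith)
                  exact mul_le_mul_of_nonneg_left hbasemono hθpos.le
              _ ≤ (α*τ)*((D k)^(1/(2*δ)) - Dstar^(1/(2*δ))) := by
                  apply mul_le_mul_of_nonneg_left hconc (by positivity)
          have hα2 : α^2 = α*τ*(Dstar^(1/(2*δ))) := by
            rw [hDstarRoot]
            field_simp
          rw [hdpow] at hkey
          have hfin : D (k+1) - Dstar ≤ q*(D k - Dstar) := by linarith only [hkey, hchain, hα2]
          have hstep2 : q*(D k - Dstar) ≤ max (q^(k+1)*(D 0 - Dstar)) (α^2) := by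
            have h1 : q*(D k - Dstar) ≤ q * max (q^k*(D 0 - Dstar)) (α^2) :=
              mul_le_mul_of_nonneg_left hkC hq0.le
            rcases max_cases (q^k*(D 0 - Dstar)) (α^2) with ⟨heq, _⟩ | ⟨heq, _⟩
            · rw [heq] at h1
              refine le_trans h1 (le_trans (le_of_eq ?_) (le_max_left _ _))
              rw [pow_succ]
              ring
            · rw [heq] at h1
              refine le_trans h1 (le_trans ?_ (le_max_right _ _))
              nlinarith only [hq0, hqlt1, sq_nonneg α]
          linarith only [hfin, hstep2]
  refine ⟨⟨hq0, hqlt1⟩, fun k => ?_⟩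
  obtain ⟨hkX, hkD, hkC⟩ := inv k
  refine ⟨⟨?_, hDcalRv⟩, hkC⟩
  calc Real.sqrt (D k) ≤ Real.sqrt (Dcal^2) := Real.sqrt_le_sqrt hkD
    _ = Dcal := Real.sqrt_sq hDcal0
end

section
/- In the Setting with δ = 1, suppose τ := μ/L ∈ (0,1). Let θ satisfy max{(5τ²−4)/(2τ²), 0} < θ < 1/2, let 0 < λ < (τ/2)·(μ/(2ρ))^{1/ν}, set q := √(1 − (1−2θ)τ²/4) and A := max{2λ/τ, dist(x_0, X*)}. Let (x_k)_{k≥0} be generated by the projected subgradient iteration with geometrically decaying step-sizes α_k = λq^{k}, with initial point x_0 ∈ T_{1/2} satisfying dist(x_0, X*) ≤ 2λ/(τ − √(τ² − 4(1−q²))). Then 0 < q < 1 and dist(x_k, X*) ≤ A·q^{k} for every k ∈ ℕ. -/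
open scoped RealInnerProductSpace

private lemma proj_obtuse_aux {n : ℕ} {X : Set (EuclideanSpace ℝ (Fin n))}
    (hXcv : Convex ℝ X) {p z w : EuclideanSpace ℝ (Fin n)}
    (hp : p ∈ X) (hw : w ∈ X)
    (hmin : ∀ y ∈ X, dist p z ≤ dist y z) : ‖p - w‖ ≤ ‖z - w‖ := by
  have hne : Nonempty X := ⟨⟨p, hp⟩⟩
  have hbdd : BddBelow (Set.range fun y : X => ‖z - (y : EuclideanSpace ℝ (Fin n))‖) := by
    refine ⟨0, ?_⟩
    rintro a ⟨y, rfl⟩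
    exact norm_nonneg _
  have hinf : ‖z - p‖ = ⨅ y : X, ‖z - (y : EuclideanSpace ℝ (Fin n))‖ := by
    refine le_antisymm (le_ciInf fun y => ?_) (ciInf_le hbdd ⟨p, hp⟩)
    have h := hmin y y.2
    rwa [dist_eq_norm, dist_eq_norm, norm_sub_rev p z, norm_sub_rev (y : EuclideanSpace ℝ (Fin n)) z] at h
  have hobt : ⟪z - p, w - p⟫ ≤ 0 :=
    (norm_eq_iInf_iff_real_inner_le_zero hXcv hp).mp hinf w hw
  have h1 : ⟪z - p, p - w⟫ = - ⟪z - p, w - p⟫ := by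
    rw [← inner_neg_right]
    congr 1
    abel
  have hexp : ‖z - w‖ ^ 2 = ‖z - p‖ ^ 2 + 2 * ⟪z - p, p - w⟫ + ‖p - w‖ ^ 2 := by
    have h2 : z - w = (z - p) + (p - w) := by abel
    rw [h2, norm_add_sq_real]
  nlinarith [norm_nonneg (z - p), norm_nonneg (p - w), norm_nonneg (z - w)]

set_option maxHeartbeats 1000000 in
/-- **Geometrically decaying step-sizes, sharp case `δ = 1`.** With
step-sizes `α_k = λ q^k` and a suitably initialized `x_0 ∈ T_{1/2}`, one has
`0 < q < 1` and `dist(x_k, X*) ≤ A q^k` for all `k`. -/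
theorem geometric_stepsize_linear_rate {n : ℕ}
    (X : Set (EuclideanSpace ℝ (Fin n))) (hXne : X.Nonempty)
    (hXcl : IsClosed X) (hXcv : Convex ℝ X)
    (f : EuclideanSpace ℝ (Fin n) → ℝ) (hf : Continuous f)
    (fstar : ℝ) (Xstar : Set (EuclideanSpace ℝ (Fin n)))
    (hXstar : Xstar = {x ∈ X | f x = fstar}) (hXstarne : Xstar.Nonempty)
    (hfstar : ∀ x ∈ X, fstar ≤ f x)
    (ρ ν μ : ℝ) (hρ : 0 < ρ) (hν : ν ∈ Set.Ioc (0 : ℝ) 1) (hμ : 0 < μ)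
    (hHEB : ∀ x ∈ X, μ * Metric.infDist x Xstar ≤ f x - fstar)
    (L : ℝ) (hL : 0 < L) (τ : ℝ) (hτ : τ = μ / L) (hτmem : 0 < τ ∧ τ < 1)
    (θ : ℝ) (hθ : max ((5 * τ ^ 2 - 4) / (2 * τ ^ 2)) 0 < θ ∧ θ < 1 / 2)
    (lam : ℝ) (hlam : 0 < lam ∧ lam < (τ / 2) * (μ / (2 * ρ)) ^ (1 / ν))
    (q : ℝ) (hq : q = Real.sqrt (1 - (1 - 2 * θ) * τ ^ 2 / 4))
    (x ζ : ℕ → EuclideanSpace ℝ (Fin n))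
    (A : ℝ) (hA : A = max (2 * lam / τ) (Metric.infDist (x 0) Xstar))
    (hx0 : x 0 ∈ X ∧ Metric.infDist (x 0) Xstar < ((1 / 2) * μ / ρ) ^ (1 / ν))
    (hx0' : Metric.infDist (x 0) Xstar ≤
        2 * lam / (τ - Real.sqrt (τ ^ 2 - 4 * (1 - q ^ 2))))
    (hζsub : ∀ k, ∀ y ∈ X,
        f (x k) + ⟪ζ k, y - x k⟫ - ρ * ‖y - x k‖ ^ (1 + ν) ≤ f y)
    (hζL : ∀ k, ‖ζ k‖ ≤ L)
    (hupd : ∀ k : ℕ, (ζ k = 0 → x (k + 1) = x k) ∧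
        (ζ k ≠ 0 → x (k + 1) ∈ X ∧ ∀ y ∈ X,
          dist (x (k + 1)) (x k - (lam * q ^ k / ‖ζ k‖) • ζ k) ≤
            dist y (x k - (lam * q ^ k / ‖ζ k‖) • ζ k))) :
    (0 < q ∧ q < 1) ∧
    ∀ k : ℕ, Metric.infDist (x k) Xstar ≤ A * q ^ k := by
  obtain ⟨hτ0, hτ1⟩ := hτmem
  obtain ⟨hθl, hθr⟩ := hθ
  obtain ⟨hlam0, hlamu⟩ := hlam
  have hθ0 : 0 < θ := lt_of_le_of_lt (le_max_right _ _) hθl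
  have hν0 : 0 < ν := hν.1
  have hτsq : 0 < τ ^ 2 := pow_pos hτ0 2
  have hτsq1 : τ ^ 2 < 1 := by nlinarith only [hτ0, hτ1]
  -- facts about q
  have hc1 : (0:ℝ) < 1 - 2 * θ := by linarith only [hθr]
  have hθτ : 0 ≤ θ * τ ^ 2 := mul_nonneg hθ0.le hτsq.le
  have harg : 0 < 1 - (1 - 2 * θ) * τ ^ 2 / 4 := by nlinarith only [hθτ, hτsq1]
  have hq2 : q ^ 2 = 1 - (1 - 2 * θ) * τ ^ 2 / 4 := by
    rw [hq, Real.sq_sqrt harg.le]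
  have hq0 : 0 < q := by rw [hq]; exact Real.sqrt_pos.mpr harg
  have hq1 : q < 1 := by nlinarith only [hq2, hq0, mul_pos hc1 hτsq]
  have hq2ge : τ ^ 2 / 4 ≤ q ^ 2 := by nlinarith only [hq2, hτsq1, hθτ]
  have hqτ : τ / 2 ≤ q := by nlinarith only [hq2ge, hq0, hτ0]
  -- facts about r
  set r := Real.sqrt (τ ^ 2 - 4 * (1 - q ^ 2)) with hrdef
  have hrarg : τ ^ 2 - 4 * (1 - q ^ 2) = 2 * θ * τ ^ 2 := by rw [hq2]; ring
  have hr0 : 0 ≤ r := Real.sqrt_nonneg _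
  have hr2 : r ^ 2 = 2 * θ * τ ^ 2 := by
    rw [hrdef, Real.sq_sqrt (by rw [hrarg]; nlinarith only [hθτ])]
    exact hrarg
  have hrτ : r < τ := by nlinarith only [hr2, hr0, hτ0, hθr, hτsq]
  have hτr : 0 < τ - r := by linarith only [hrτ]
  -- the threshold D
  have hDbase : (0:ℝ) < μ / (2 * ρ) := by positivity
  set D := (μ / (2 * ρ)) ^ (1 / ν) with hDdef
  have hD0 : 0 < D := Real.rpow_pos_of_pos hDbase _
  have hDeq : ((1 / 2) * μ / ρ : ℝ) = μ / (2 * ρ) := by ring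
  -- A facts
  have hd00 : 0 ≤ Metric.infDist (x 0) Xstar := Metric.infDist_nonneg
  have hA0 : 0 ≤ A := by rw [hA]; exact le_trans hd00 (le_max_right _ _)
  have hA2 : 2 * lam ≤ A * τ := by
    have h1 : 2 * lam / τ ≤ A := by rw [hA]; exact le_max_left _ _
    have h2 := mul_le_mul_of_nonneg_right h1 hτ0.le
    rw [div_mul_cancel₀ _ hτ0.ne'] at h2
    exact h2
  have hAD : A < D := by
    rw [hA]
    apply max_lt
    · rw [div_lt_iff₀ hτ0]; linarith only [hlamu]
    · rw [hDdef, ← hDeq]; exact hx0.2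
  have hAr : A * (τ - r) ≤ 2 * lam := by
    have h1 : A ≤ 2 * lam / (τ - r) := by
      rw [hA]
      apply max_le
      · exact div_le_div_of_nonneg_left (by linarith only [hlam0]) hτr
          (by linarith only [hr0])
      · exact hx0'
    have h2 := mul_le_mul_of_nonneg_right h1 hτr.le
    rwa [div_mul_cancel₀ _ hτr.ne'] at h2
  -- key rpow bound
  have key : ∀ d : ℝ, 0 ≤ d → d < D → ρ * d ^ ν ≤ μ / 2 := by
    intro d hd0 hdD
    rcases eq_or_lt_of_le hd0 with h | h
    · rw [← h, Real.zero_rpow hν0.ne', mul_zero]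
      positivity
    · have hlt : d ^ ν < D ^ ν := Real.rpow_lt_rpow hd0 hdD hν0
      have hDν : D ^ ν = μ / (2 * ρ) := by
        rw [hDdef, ← Real.rpow_mul hDbase.le, one_div, inv_mul_cancel₀ hν0.ne',
          Real.rpow_one]
      rw [hDν] at hlt
      have h2 := mul_le_mul_of_nonneg_left hlt.le hρ.le
      calc ρ * d ^ ν ≤ ρ * (μ / (2 * ρ)) := h2
      _ = μ / 2 := by field_simp
  -- closedness of Xstar
  have hXscl : IsClosed Xstar := by
    rw [hXstar]
    exact hXcl.inter (isClosed_eq hf continuous_const)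
  -- main induction
  refine ⟨⟨hq0, hq1⟩, ?_⟩
  have main : ∀ k : ℕ, x k ∈ X ∧ Metric.infDist (x k) Xstar ≤ A * q ^ k := by
    intro k
    induction k with
    | zero =>
      refine ⟨hx0.1, ?_⟩
      rw [hA, pow_zero, mul_one]
      exact le_max_right _ _
    | succ k ih =>
      obtain ⟨hxk, hdk⟩ := ih
      set d := Metric.infDist (x k) Xstar with hddef
      have hd0 : 0 ≤ d := Metric.infDist_nonneg
      have hqk0 : 0 < q ^ k := pow_pos hq0 k
      have hqk1 : q ^ k ≤ 1 := pow_le_one₀ hq0.le hq1.le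
      have hdD : d < D := by
        have h1 : A * q ^ k ≤ A * 1 := mul_le_mul_of_nonneg_left hqk1 hA0
        rw [mul_one] at h1
        linarith only [hdk, h1, hAD]
      -- nearest point
      obtain ⟨xs, hxsm, hxsd⟩ := hXscl.exists_infDist_eq_dist hXstarne (x k)
      have hxsm' : xs ∈ X ∧ f xs = fstar := by rw [hXstar] at hxsm; exact hxsm
      have hxsX : xs ∈ X := hxsm'.1
      have hnorm : ‖xs - x k‖ = d := by
        rw [← dist_eq_norm, dist_comm, ← hxsd]
      -- inner product bound
      have hsub := hζsub k xs hxsX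
      rw [hxsm'.2, hnorm] at hsub
      have hheb := hHEB (x k) hxk
      rw [← hddef] at hheb
      have hpow : d ^ (1 + ν) = d * d ^ ν := by
        rw [Real.rpow_add' hd0 (by linarith only [hν0] : (0:ℝ) < 1 + ν).ne',
          Real.rpow_one]
      have hkey := key d hd0 hdD
      have hprod : ρ * (d * d ^ ν) ≤ μ / 2 * d := by
        nlinarith only [mul_le_mul_of_nonneg_right hkey hd0]
      have hflip : ⟪ζ k, x k - xs⟫ = - ⟪ζ k, xs - x k⟫ := by
        rw [← inner_neg_right]
        congr 1
        abel
      have hinner : μ * d / 2 ≤ ⟪ζ k, x k - xs⟫ := by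
        rw [hflip]
        rw [hpow] at hsub
        linarith only [hsub, hheb, hprod]
      by_cases hz : ζ k = 0
      · have hxe := (hupd k).1 hz
        have hiz : ⟪ζ k, x k - xs⟫ = 0 := by rw [hz]; exact inner_zero_left _
        have hdz : d = 0 :=
          le_antisymm (by nlinarith only [hinner, hiz, hμ, hd0]) hd0
        refine ⟨by rw [hxe]; exact hxk, ?_⟩
        rw [hxe, ← hddef, hdz]
        exact mul_nonneg hA0 (pow_nonneg hq0.le _)
      · obtain ⟨hmemX, hmin⟩ := (hupd k).2 hz
        set z := x k - (lam * q ^ k / ‖ζ k‖) • ζ k with hzdef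
        have hζ0 : 0 < ‖ζ k‖ := norm_pos_iff.mpr hz
        have hs0 : 0 < lam * q ^ k / ‖ζ k‖ := div_pos (mul_pos hlam0 hqk0) hζ0
        have hstep : ‖(lam * q ^ k / ‖ζ k‖) • ζ k‖ = lam * q ^ k := by
          rw [norm_smul, Real.norm_eq_abs, abs_of_pos hs0, div_mul_cancel₀ _ hζ0.ne']
        -- descent inequality
        have e1 : ‖z - xs‖ ^ 2 =
            d ^ 2 - 2 * ((lam * q ^ k / ‖ζ k‖) * ⟪ζ k, x k - xs⟫) + (lam * q ^ k) ^ 2 := by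
          have h2 : z - xs = (x k - xs) - (lam * q ^ k / ‖ζ k‖) • ζ k := by
            rw [hzdef]; abel
          rw [h2, norm_sub_sq_real, real_inner_smul_right, hstep,
            norm_sub_rev (x k) xs, hnorm, real_inner_comm]
        have hsL : lam * q ^ k / L ≤ lam * q ^ k / ‖ζ k‖ :=
          div_le_div_of_nonneg_left (mul_pos hlam0 hqk0).le hζ0 (hζL k)
        have hμd0 : 0 ≤ μ * d / 2 := div_nonneg (mul_nonneg hμ.le hd0) (by norm_num)
        have hip0 : 0 ≤ ⟪ζ k, x k - xs⟫ := le_trans hμd0 hinner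
        have h2s : τ * (lam * q ^ k) * d ≤
            2 * ((lam * q ^ k / ‖ζ k‖) * ⟪ζ k, x k - xs⟫) := by
          have hm : (lam * q ^ k / L) * (μ * d / 2) ≤
              (lam * q ^ k / ‖ζ k‖) * ⟪ζ k, x k - xs⟫ :=
            mul_le_mul hsL hinner hμd0 hs0.le
          have he : τ * (lam * q ^ k) * d = 2 * ((lam * q ^ k / L) * (μ * d / 2)) := by
            rw [hτ]; field_simp
          linarith only [hm, he]
        have hzx : ‖z - xs‖ ^ 2 ≤ d ^ 2 - τ * (lam * q ^ k) * d + (lam * q ^ k) ^ 2 := by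
          rw [e1]; linarith only [h2s]
        -- quadratic endpoint bounds
        have hlamAq : lam ≤ A * q := by nlinarith only [hA2, hqτ, hA0]
        have hb1 : (lam * q ^ k) ^ 2 ≤ (A * q ^ (k + 1)) ^ 2 := by
          have h1 : lam ^ 2 ≤ (A * q) ^ 2 := by nlinarith only [hlamAq, hlam0]
          have h2 := mul_le_mul_of_nonneg_right h1 (sq_nonneg (q ^ k))
          calc (lam * q ^ k) ^ 2 = lam ^ 2 * (q ^ k) ^ 2 := by ring
          _ ≤ (A * q) ^ 2 * (q ^ k) ^ 2 := h2
          _ = (A * q ^ (k + 1)) ^ 2 := by rw [pow_succ q k]; ring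
        have hkey2 : (1 - q ^ 2) * A ^ 2 - τ * lam * A + lam ^ 2 ≤ 0 := by
          have hterm1 : (τ - r) * A - 2 * lam ≤ 0 := by linarith only [hAr]
          have hterm2 : 0 ≤ (τ + r) * A - 2 * lam := by
            linarith only [hA2, mul_nonneg hA0 hr0]
          have h4 : τ ^ 2 - r ^ 2 = 4 * (1 - q ^ 2) := by rw [hr2, hq2]; ring
          have h4A : (τ ^ 2 - r ^ 2) * A ^ 2 = 4 * (1 - q ^ 2) * A ^ 2 := by rw [h4]
          have hm := mul_nonpos_of_nonpos_of_nonneg hterm1 hterm2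
          nlinarith only [hm, h4A]
        have hb2 : (A * q ^ k) ^ 2 - τ * (lam * q ^ k) * (A * q ^ k) + (lam * q ^ k) ^ 2 ≤
            (A * q ^ (k + 1)) ^ 2 := by
          have h5 : ((1 - q ^ 2) * A ^ 2 - τ * lam * A + lam ^ 2) * (q ^ k) ^ 2 ≤ 0 :=
            mul_nonpos_of_nonpos_of_nonneg hkey2 (sq_nonneg _)
          rw [pow_succ q k]
          nlinarith only [h5]
        have hquad : d ^ 2 - τ * (lam * q ^ k) * d + (lam * q ^ k) ^ 2 ≤
            (A * q ^ (k + 1)) ^ 2 := by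
          rcases le_or_gt d (τ * (lam * q ^ k)) with h | h
          · have hnp : d * (d - τ * (lam * q ^ k)) ≤ 0 :=
              mul_nonpos_of_nonneg_of_nonpos hd0 (by linarith only [h])
            nlinarith only [hnp, hb1]
          · have hAqk0 : 0 ≤ A * q ^ k := mul_nonneg hA0 (pow_nonneg hq0.le _)
            have hmm : d * (d - τ * (lam * q ^ k)) ≤
                (A * q ^ k) * ((A * q ^ k) - τ * (lam * q ^ k)) :=
              mul_le_mul hdk (by linarith only [hdk]) (by linarith only [h]) hAqk0
            nlinarith only [hmm, hb2]
        -- projection step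
        have hproj : ‖x (k + 1) - xs‖ ≤ ‖z - xs‖ :=
          proj_obtuse_aux hXcv hmemX hxsX hmin
        have h6 : ‖z - xs‖ ^ 2 ≤ (A * q ^ (k + 1)) ^ 2 := le_trans hzx hquad
        have hrhs0 : 0 ≤ A * q ^ (k + 1) := mul_nonneg hA0 (pow_nonneg hq0.le _)
        have h7 : ‖z - xs‖ ≤ A * q ^ (k + 1) := by
          nlinarith only [h6, hrhs0, norm_nonneg (z - xs)]
        refine ⟨hmemX, ?_⟩
        calc Metric.infDist (x (k + 1)) Xstar ≤ dist (x (k + 1)) xs :=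
              Metric.infDist_le_dist_of_mem hxsm
        _ = ‖x (k + 1) - xs‖ := dist_eq_norm _ _
        _ ≤ ‖z - xs‖ := hproj
        _ ≤ A * q ^ (k + 1) := h7
  exact fun k => (main k).2
end
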